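/- arXiv:2003.13445 — 5 statements merged into one kernel-verified Lean document; each statement's English description precedes it below -/
import Mathlib

section
/- Let (A_n)_{n∈ℤ} admit a generalized exponential dichotomy with bounds ‖𝒜(m,n)P_n‖ ≤ D e^{-λ(m-n)} for m ≥ n and ‖𝒜(m,n)(Id-P_n)‖ ≤ D e^{-λ(n-m)} for m ≤ n. If (y_n)_{n∈ℤ} is a bounded sequence in X, then the sequence x_n = Σ_{k=-∞}^{n} 𝒜(n,k)P_k y_k − Σ_{k=n+1}^{∞} 𝒜(n,k)(Id - P_k) y_k is well-defined (the series converge absolutely), bounded, and satisfies x_{n+1} − A_n x_n = y_{n+1} for every n ∈ ℤ. -/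
/-!
The sequence `x` is the Lyapunov–Perron (Green's function) sum: each term of the stable series
at time `n` is bounded by `D C e^{-λ k}` and each term of the unstable series by `D C e^{-λ (k+1)}`,
so both series are dominated by one geometric series, uniformly in `n`. Applying `A n` to the
series at time `n` reproduces the series at time `n + 1`, except for the index-shift boundary
terms `P (n+1) y (n+1)` and `(Id - P (n+1)) y (n+1)`, which add up to `y (n+1)`.
-/

open Real

section Geometric

variable {E : Type*} [SeminormedAddCommGroup E] {f : ℕ → E} {M r : ℝ}

lemma summable_norm_of_le_geometric (hr0 : 0 ≤ r) (hr1 : r < 1)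
    (hf : ∀ k, ‖f k‖ ≤ M * r ^ k) : Summable fun k => ‖f k‖ :=
  ((summable_geometric_of_lt_one hr0 hr1).mul_left M).of_nonneg_of_le (fun _ => norm_nonneg _) hf

lemma norm_tsum_le_of_le_geometric (hr0 : 0 ≤ r) (hr1 : r < 1)
    (hf : ∀ k, ‖f k‖ ≤ M * r ^ k) : ‖∑' k, f k‖ ≤ M * (1 - r)⁻¹ :=
  tsum_of_norm_bounded ((hasSum_geometric_of_lt_one hr0 hr1).mul_left M) hf

end Geometric

namespace Dichotomy

variable {𝕜 X : Type*} [NontriviallyNormedField 𝕜] [NormedAddCommGroup X] [NormedSpace 𝕜 X]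
  (𝒜 : ℤ → ℤ → X →L[𝕜] X) (P : ℤ → X →L[𝕜] X) (y : ℤ → X)

def stableTerm (n : ℤ) (k : ℕ) : X :=
  𝒜 n (n - k) (P (n - k) (y (n - k)))

def unstableTerm (n : ℤ) (k : ℕ) : X :=
  𝒜 n (n + 1 + k) (y (n + 1 + k) - P (n + 1 + k) (y (n + 1 + k)))

noncomputable def solution (n : ℤ) : X :=
  (∑' k, stableTerm 𝒜 P y n k) - ∑' k, unstableTerm 𝒜 P y n k

variable {A : ℤ → X →L[𝕜] X} {𝒜 P y}

lemma tsum_stableTerm_succ (hid : ∀ n, 𝒜 n n = ContinuousLinearMap.id 𝕜 X)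
    (hco : ∀ m n, 𝒜 (m + 1) n = (A m).comp (𝒜 m n)) (hs : ∀ n, Summable (stableTerm 𝒜 P y n))
    (n : ℤ) :
    ∑' k, stableTerm 𝒜 P y (n + 1) k =
      P (n + 1) (y (n + 1)) + A n (∑' k, stableTerm 𝒜 P y n k) := by
  have hshift (k : ℕ) : stableTerm 𝒜 P y (n + 1) (k + 1) = A n (stableTerm 𝒜 P y n k) := by
    simp only [stableTerm, hco]
    rw [show n + 1 - ((k + 1 : ℕ) : ℤ) = n - k by push_cast; ring]
    rfl
  rw [(hs (n + 1)).tsum_eq_zero_add, (A n).map_tsum (hs n)]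
  simp only [hshift]
  simp [stableTerm, hid]

lemma map_tsum_unstableTerm (hid : ∀ n, 𝒜 n n = ContinuousLinearMap.id 𝕜 X)
    (hco : ∀ m n, 𝒜 (m + 1) n = (A m).comp (𝒜 m n)) (hs : ∀ n, Summable (unstableTerm 𝒜 P y n))
    (n : ℤ) :
    A n (∑' k, unstableTerm 𝒜 P y n k) =
      (y (n + 1) - P (n + 1) (y (n + 1))) + ∑' k, unstableTerm 𝒜 P y (n + 1) k := by
  have hshift (k : ℕ) : unstableTerm 𝒜 P y (n + 1) k = A n (unstableTerm 𝒜 P y n (k + 1)) := by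
    simp only [unstableTerm, hco]
    rw [show n + 1 + 1 + (k : ℤ) = n + 1 + ((k + 1 : ℕ) : ℤ) by push_cast; ring]
    rfl
  rw [(hs n).tsum_eq_zero_add, map_add, (A n).map_tsum ((summable_nat_add_iff 1).mpr (hs n))]
  simp only [hshift]
  congr 1
  have hback (v : X) : A n (𝒜 n (n + 1) v) = v := by
    rw [← ContinuousLinearMap.comp_apply, ← hco, hid, ContinuousLinearMap.id_apply]
  simp [unstableTerm, hback]

lemma solution_succ_sub_map (hid : ∀ n, 𝒜 n n = ContinuousLinearMap.id 𝕜 X)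
    (hco : ∀ m n, 𝒜 (m + 1) n = (A m).comp (𝒜 m n)) (hs : ∀ n, Summable (stableTerm 𝒜 P y n))
    (hu : ∀ n, Summable (unstableTerm 𝒜 P y n)) (n : ℤ) :
    solution 𝒜 P y (n + 1) - A n (solution 𝒜 P y n) = y (n + 1) := by
  rw [solution, solution, map_sub, tsum_stableTerm_succ hid hco hs,
    map_tsum_unstableTerm hid hco hu]
  abel

variable {D lam C : ℝ}

lemma norm_stableTerm_le
    (hb : ∀ m n, n ≤ m → ‖(𝒜 m n).comp (P n)‖ ≤ D * exp (-lam * ((m : ℝ) - (n : ℝ))))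
    (hC : ∀ n, ‖y n‖ ≤ C) (n : ℤ) (k : ℕ) :
    ‖stableTerm 𝒜 P y n k‖ ≤ D * C * exp (-lam) ^ k := by
  have hop := hb n (n - k) (by omega)
  rw [show (n : ℝ) - ((n - k : ℤ) : ℝ) = k by push_cast; ring, show -lam * k = k * -lam by ring,
    exp_nat_mul] at hop
  exact ((𝒜 n (n - k)).comp (P (n - k))).le_of_opNorm_le_of_le hop (hC _) |>.trans_eq (by ring)

lemma norm_unstableTerm_le
    (hb : ∀ m n, m ≤ n →
      ‖(𝒜 m n).comp (ContinuousLinearMap.id 𝕜 X - P n)‖ ≤ D * exp (-lam * ((n : ℝ) - (m : ℝ))))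
    (hC : ∀ n, ‖y n‖ ≤ C) (n : ℤ) (k : ℕ) :
    ‖unstableTerm 𝒜 P y n k‖ ≤ D * C * exp (-lam) * exp (-lam) ^ k := by
  have hop := hb n (n + 1 + k) (by omega)
  rw [show ((n + 1 + k : ℤ) : ℝ) - n = (k + 1 : ℕ) by push_cast; ring,
    show -lam * (k + 1 : ℕ) = (k + 1 : ℕ) * -lam by ring, exp_nat_mul] at hop
  exact ((𝒜 n (n + 1 + k)).comp (ContinuousLinearMap.id 𝕜 X - P (n + 1 + k))).le_of_opNorm_le_of_le
    hop (hC _) |>.trans_eq (by ring)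

end Dichotomy

open Dichotomy in
theorem stmt_1_general
    {X : Type*} [NormedAddCommGroup X] [NormedSpace ℝ X] [CompleteSpace X]
    (A : ℤ → X ≃L[ℝ] X) (𝒜 : ℤ → ℤ → X →L[ℝ] X)
    (hid : ∀ n, 𝒜 n n = ContinuousLinearMap.id ℝ X)
    (hco : ∀ m n, 𝒜 (m + 1) n = (A m : X →L[ℝ] X).comp (𝒜 m n))
    (P : ℤ → X →L[ℝ] X)
    (D lam : ℝ) (hlam : 0 < lam)
    (hb1 : ∀ m n, n ≤ m →
      ‖(𝒜 m n).comp (P n)‖ ≤ D * Real.exp (-lam * ((m : ℝ) - (n : ℝ))))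
    (hb2 : ∀ m n, m ≤ n →
      ‖(𝒜 m n).comp (ContinuousLinearMap.id ℝ X - P n)‖ ≤
        D * Real.exp (-lam * ((n : ℝ) - (m : ℝ))))
    (y : ℤ → X) (hy : ∃ C, ∀ n, ‖y n‖ ≤ C) :
    ∃ x : ℤ → X,
      (∀ n : ℤ,
        Summable (fun k : ℕ => ‖𝒜 n (n - (k : ℤ)) (P (n - (k : ℤ)) (y (n - (k : ℤ))))‖) ∧
        Summable (fun k : ℕ =>
          ‖𝒜 n (n + 1 + (k : ℤ))
            (y (n + 1 + (k : ℤ)) - P (n + 1 + (k : ℤ)) (y (n + 1 + (k : ℤ))))‖)) ∧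
      (∀ n : ℤ, x n =
        (∑' k : ℕ, 𝒜 n (n - (k : ℤ)) (P (n - (k : ℤ)) (y (n - (k : ℤ))))) -
        (∑' k : ℕ, 𝒜 n (n + 1 + (k : ℤ))
          (y (n + 1 + (k : ℤ)) - P (n + 1 + (k : ℤ)) (y (n + 1 + (k : ℤ)))))) ∧
      (∃ C, ∀ n, ‖x n‖ ≤ C) ∧
      (∀ n : ℤ, x (n + 1) - A n (x n) = y (n + 1)) := by
  obtain ⟨C, hC⟩ := hy
  have hr0 : 0 ≤ exp (-lam) := (exp_pos _).le
  have hr1 : exp (-lam) < 1 := exp_lt_one_iff.mpr (by linarith)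
  have hs := norm_stableTerm_le hb1 hC
  have hu := norm_unstableTerm_le hb2 hC
  have hs_sum n := summable_norm_of_le_geometric hr0 hr1 (hs n)
  have hu_sum n := summable_norm_of_le_geometric hr0 hr1 (hu n)
  refine ⟨solution 𝒜 P y, fun n => ⟨hs_sum n, hu_sum n⟩, fun n => rfl, ⟨_, fun n =>
    (norm_sub_le _ _).trans (add_le_add (norm_tsum_le_of_le_geometric hr0 hr1 (hs n))
      (norm_tsum_le_of_le_geometric hr0 hr1 (hu n)))⟩, ?_⟩
  exact solution_succ_sub_map (A := fun m => (A m : X →L[ℝ] X)) hid hco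
    (fun n => (hs_sum n).of_norm) (fun n => (hu_sum n).of_norm)

theorem stmt_1
    {X : Type*} [NormedAddCommGroup X] [NormedSpace ℝ X] [CompleteSpace X]
    (A : ℤ → X ≃L[ℝ] X) (𝒜 : ℤ → ℤ → X →L[ℝ] X)
    (hid : ∀ n, 𝒜 n n = ContinuousLinearMap.id ℝ X)
    (hco : ∀ m n, 𝒜 (m + 1) n = (A m : X →L[ℝ] X).comp (𝒜 m n))
    (P : ℤ → X →L[ℝ] X)
    (D lam : ℝ) (hD : 0 < D) (hlam : 0 < lam)
    (hb1 : ∀ m n, n ≤ m →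
      ‖(𝒜 m n).comp (P n)‖ ≤ D * Real.exp (-lam * ((m : ℝ) - (n : ℝ))))
    (hb2 : ∀ m n, m ≤ n →
      ‖(𝒜 m n).comp (ContinuousLinearMap.id ℝ X - P n)‖ ≤
        D * Real.exp (-lam * ((n : ℝ) - (m : ℝ))))
    (y : ℤ → X) (hy : ∃ C, ∀ n, ‖y n‖ ≤ C) :
    ∃ x : ℤ → X,
      (∀ n : ℤ,
        Summable (fun k : ℕ => ‖𝒜 n (n - (k : ℤ)) (P (n - (k : ℤ)) (y (n - (k : ℤ))))‖) ∧
        Summable (fun k : ℕ =>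
          ‖𝒜 n (n + 1 + (k : ℤ))
            (y (n + 1 + (k : ℤ)) - P (n + 1 + (k : ℤ)) (y (n + 1 + (k : ℤ))))‖)) ∧
      (∀ n : ℤ, x n =
        (∑' k : ℕ, 𝒜 n (n - (k : ℤ)) (P (n - (k : ℤ)) (y (n - (k : ℤ))))) -
        (∑' k : ℕ, 𝒜 n (n + 1 + (k : ℤ))
          (y (n + 1 + (k : ℤ)) - P (n + 1 + (k : ℤ)) (y (n + 1 + (k : ℤ)))))) ∧
      (∃ C, ∀ n, ‖x n‖ ≤ C) ∧
      (∀ n : ℤ, x (n + 1) - A n (x n) = y (n + 1)) :=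
  stmt_1_general A 𝒜 hid hco P D lam hlam hb1 hb2 y hy
end

section
/- Assume (A_n)_{n∈ℤ} admits a generalized exponential dichotomy with constants D, λ and that the maps f_n : X → X satisfy sup_n ‖f_n‖_∞ =: M < ∞ and are c-Lipschitz. Define the operator 𝒯 on 𝒴 by (𝒯h)_n(x) = Σ_{k≤n} 𝒜(n,k)P_k f_{k-1}(𝒜(k-1,n)x + h_{k-1}(𝒜(k-1,n)x)) − Σ_{k>n} 𝒜(n,k)(Id − P_k) f_{k-1}(𝒜(k-1,n)x + h_{k-1}(𝒜(k-1,n)x)). Then 𝒯 is well-defined on 𝒴, maps 𝒴 into itself with ‖𝒯h‖_𝒴 ≤ D(1+e^{-λ})/(1−e^{-λ}) · M, and satisfies ‖𝒯h¹ − 𝒯h²‖_𝒴 ≤ cD(1+e^{-λ})/(1−e^{-λ}) · ‖h¹ − h²‖_𝒴; in particular 𝒯 is a contraction whenever cD(1+e^{-λ})/(1−e^{-λ}) < 1. -/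
/-!
`(𝒯h)_n(x)` is the Green operator of the dichotomy applied to the bounded sequence
`g_j = f_j(𝒜(j,n)x + h_j(𝒜(j,n)x))`. Its stable and unstable parts are dominated termwise by the
geometric series `D‖g‖ e^{-λk}` and `D‖g‖ e^{-λ(k+1)}`, whose sums add up to
`D(1+e^{-λ})/(1-e^{-λ}) ‖g‖`. The Green operator is linear in `g`, so the Lipschitz estimate is
the same bound applied to `g¹ - g²`, which is at most `c‖h¹ - h²‖`. For the range condition, the
stable part lies in the closed space `S_n` by forward invariance, and `A_n` maps the unstable part
into the closed space `U_{n+1}` by backward invariance.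
-/

/-- Membership of a sequence of maps in the space `𝒴`. -/
def MemY {X : Type*} [NormedAddCommGroup X] [NormedSpace ℝ X]
    (A : ℤ → X ≃L[ℝ] X) (S U : ℤ → Submodule ℝ X) (h : ℤ → X → X) : Prop :=
  (∀ n, Continuous (h n)) ∧
  (∀ n x, h n x ∈ S n ⊔ (U (n + 1)).map ((A n).symm.toLinearEquiv.toLinearMap)) ∧
  (∃ C, ∀ n x, ‖h n x‖ ≤ C)

theorem sub_apply_mem_of_isCompl {R M F : Type*} [Ring R] [AddCommGroup M] [Module R M]
    [FunLike F M M] [AddMonoidHomClass F M M] {S U : Submodule R M} (hSU : IsCompl S U)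
    {P : F} (hPS : ∀ x ∈ S, P x = x) (hPU : ∀ x ∈ U, P x = 0) (x : M) : x - P x ∈ U := by
  have hx : x ∈ S ⊔ U := by simp [hSU.sup_eq_top]
  obtain ⟨s, hs, u, hu, rfl⟩ := Submodule.mem_sup.mp hx
  simpa [hPS s hs, hPU u hu] using hu

theorem norm_tsum_le_of_norm_le_geometric {E : Type*} [NormedAddCommGroup E] {u : ℕ → E}
    {C r : ℝ} (hr₀ : 0 ≤ r) (hr₁ : r < 1) (hu : ∀ k, ‖u k‖ ≤ C * r ^ k) :
    ‖∑' k, u k‖ ≤ C / (1 - r) :=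
  tsum_of_norm_bounded ((hasSum_geometric_of_lt_one hr₀ hr₁).mul_left C) hu

theorem summable_of_norm_le_geometric {E : Type*} [NormedAddCommGroup E] [CompleteSpace E]
    {u : ℕ → E} {C r : ℝ} (hr₀ : 0 ≤ r) (hr₁ : r < 1) (hu : ∀ k, ‖u k‖ ≤ C * r ^ k) :
    Summable u :=
  .of_norm_bounded ((summable_geometric_of_lt_one hr₀ hr₁).mul_left C) hu

section Evolution

variable {X : Type*} [NormedAddCommGroup X] [NormedSpace ℝ X] {A : ℤ → X ≃L[ℝ] X}
  {𝒜 : ℤ → ℤ → X →L[ℝ] X}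

theorem evolution_mem_of_le {S : ℤ → Submodule ℝ X}
    (hid : ∀ n, 𝒜 n n = ContinuousLinearMap.id ℝ X)
    (hco : ∀ m n, 𝒜 (m + 1) n = (A m : X →L[ℝ] X).comp (𝒜 m n))
    (hSinv : ∀ n, ∀ x ∈ S n, A n x ∈ S (n + 1)) {m n : ℤ} (hmn : m ≤ n) {x : X} (hx : x ∈ S m) :
    𝒜 n m x ∈ S n := by
  induction n, hmn using Int.leInduction with
  | base => simpa [hid] using hx
  | succ n _ ih => simpa [hco] using hSinv n _ ih

theorem evolution_mem_of_ge {U : ℤ → Submodule ℝ X}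
    (hid : ∀ n, 𝒜 n n = ContinuousLinearMap.id ℝ X)
    (hco : ∀ m n, 𝒜 (m + 1) n = (A m : X →L[ℝ] X).comp (𝒜 m n))
    (hUinv : ∀ n, ∀ x ∈ U (n + 1), (A n).symm x ∈ U n) {m n : ℤ} (hnm : n ≤ m) {x : X}
    (hx : x ∈ U m) : 𝒜 n m x ∈ U n := by
  induction n, hnm using Int.leInductionDown with
  | base => simpa [hid] using hx
  | pred n _ ih =>
    have hstep : 𝒜 (n - 1 + 1) m x = A (n - 1) (𝒜 (n - 1) m x) := by rw [hco]; rfl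
    rw [sub_add_cancel] at hstep
    rw [← (A (n - 1)).symm_apply_apply (𝒜 (n - 1) m x), ← hstep]
    exact hUinv (n - 1) _ (by rwa [sub_add_cancel])

end Evolution

section GreenSum

variable {X : Type*} [NormedAddCommGroup X] [NormedSpace ℝ X]

-- The `k`-th terms of `∑_{j ≤ n} 𝒜(n,j) P_j g_{j-1}` and `∑_{j > n} 𝒜(n,j) (Id - P_j) g_{j-1}`.
def stableTerm (𝒜 : ℤ → ℤ → X →L[ℝ] X) (P : ℤ → X →L[ℝ] X) (n : ℤ) (g : ℤ → X) (k : ℕ) : X :=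
  𝒜 n (n - k) (P (n - k) (g (n - k - 1)))

def unstableTerm (𝒜 : ℤ → ℤ → X →L[ℝ] X) (P : ℤ → X →L[ℝ] X) (n : ℤ) (g : ℤ → X) (k : ℕ) : X :=
  𝒜 n (n + 1 + k) (g (n + k) - P (n + 1 + k) (g (n + k)))

noncomputable def greenSum (𝒜 : ℤ → ℤ → X →L[ℝ] X) (P : ℤ → X →L[ℝ] X) (n : ℤ) (g : ℤ → X) : X :=
  (∑' k, stableTerm 𝒜 P n g k) - ∑' k, unstableTerm 𝒜 P n g k

variable {𝒜 : ℤ → ℤ → X →L[ℝ] X} {P : ℤ → X →L[ℝ] X} {D lam B : ℝ} {n : ℤ} {g : ℤ → X}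

theorem norm_stableTerm_le
    (hb1 : ∀ m n, n ≤ m →
      ‖(𝒜 m n).comp (P n)‖ ≤ D * Real.exp (-lam * ((m : ℝ) - (n : ℝ))))
    (hg : ∀ j, ‖g j‖ ≤ B) (k : ℕ) :
    ‖stableTerm 𝒜 P n g k‖ ≤ D * B * Real.exp (-lam) ^ k := by
  have hexp : Real.exp (-lam * ((n : ℝ) - ((n - k : ℤ) : ℝ))) = Real.exp (-lam) ^ k := by
    rw [← Real.exp_nat_mul]; push_cast; ring_nf
  have h := ((𝒜 n (n - k)).comp (P (n - k))).le_of_opNorm_le_of_le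
    ((hb1 n (n - k) (by omega)).trans_eq (by rw [hexp])) (hg (n - k - 1))
  exact h.trans_eq (by ring)

theorem norm_unstableTerm_le
    (hb2 : ∀ m n, m ≤ n →
      ‖(𝒜 m n).comp (ContinuousLinearMap.id ℝ X - P n)‖ ≤
        D * Real.exp (-lam * ((n : ℝ) - (m : ℝ))))
    (hg : ∀ j, ‖g j‖ ≤ B) (k : ℕ) :
    ‖unstableTerm 𝒜 P n g k‖ ≤ D * B * Real.exp (-lam) * Real.exp (-lam) ^ k := by
  have hexp : Real.exp (-lam * (((n + 1 + k : ℤ) : ℝ) - (n : ℝ))) =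
      Real.exp (-lam) ^ (k + 1) := by
    rw [← Real.exp_nat_mul]; push_cast; ring_nf
  have h := ((𝒜 n (n + 1 + k)).comp (ContinuousLinearMap.id ℝ X - P (n + 1 + k))
    ).le_of_opNorm_le_of_le ((hb2 n (n + 1 + k) (by omega)).trans_eq (by rw [hexp])) (hg (n + k))
  exact h.trans_eq (by ring)

theorem norm_greenSum_le
    (hb1 : ∀ m n, n ≤ m →
      ‖(𝒜 m n).comp (P n)‖ ≤ D * Real.exp (-lam * ((m : ℝ) - (n : ℝ))))
    (hb2 : ∀ m n, m ≤ n →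
      ‖(𝒜 m n).comp (ContinuousLinearMap.id ℝ X - P n)‖ ≤
        D * Real.exp (-lam * ((n : ℝ) - (m : ℝ))))
    (hlam : 0 < lam) (hg : ∀ j, ‖g j‖ ≤ B) :
    ‖greenSum 𝒜 P n g‖ ≤ D * (1 + Real.exp (-lam)) / (1 - Real.exp (-lam)) * B := by
  have hr₀ := (Real.exp_pos (-lam)).le
  have hr₁ : Real.exp (-lam) < 1 := Real.exp_lt_one_iff.mpr (neg_neg_of_pos hlam)
  calc ‖greenSum 𝒜 P n g‖
      ≤ ‖∑' k, stableTerm 𝒜 P n g k‖ + ‖∑' k, unstableTerm 𝒜 P n g k‖ := norm_sub_le _ _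
    _ ≤ D * B / (1 - Real.exp (-lam)) + D * B * Real.exp (-lam) / (1 - Real.exp (-lam)) :=
      add_le_add (norm_tsum_le_of_norm_le_geometric hr₀ hr₁ (norm_stableTerm_le hb1 hg))
        (norm_tsum_le_of_norm_le_geometric hr₀ hr₁ (norm_unstableTerm_le hb2 hg))
    _ = D * (1 + Real.exp (-lam)) / (1 - Real.exp (-lam)) * B := by ring

theorem greenSum_sub [CompleteSpace X]
    (hb1 : ∀ m n, n ≤ m →
      ‖(𝒜 m n).comp (P n)‖ ≤ D * Real.exp (-lam * ((m : ℝ) - (n : ℝ))))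
    (hb2 : ∀ m n, m ≤ n →
      ‖(𝒜 m n).comp (ContinuousLinearMap.id ℝ X - P n)‖ ≤
        D * Real.exp (-lam * ((n : ℝ) - (m : ℝ))))
    (hlam : 0 < lam) {g₁ g₂ : ℤ → X} {B₁ B₂ : ℝ} (hg₁ : ∀ j, ‖g₁ j‖ ≤ B₁)
    (hg₂ : ∀ j, ‖g₂ j‖ ≤ B₂) :
    greenSum 𝒜 P n g₁ - greenSum 𝒜 P n g₂ = greenSum 𝒜 P n (g₁ - g₂) := by
  have hr₀ := (Real.exp_pos (-lam)).le
  have hr₁ : Real.exp (-lam) < 1 := Real.exp_lt_one_iff.mpr (neg_neg_of_pos hlam)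
  have hs (g : ℤ → X) (B : ℝ) (hg : ∀ j, ‖g j‖ ≤ B) :=
    summable_of_norm_le_geometric hr₀ hr₁ (norm_stableTerm_le (n := n) hb1 hg)
  have hu (g : ℤ → X) (B : ℝ) (hg : ∀ j, ‖g j‖ ≤ B) :=
    summable_of_norm_le_geometric hr₀ hr₁ (norm_unstableTerm_le (n := n) hb2 hg)
  have hs_sub (k : ℕ) : stableTerm 𝒜 P n (g₁ - g₂) k =
      stableTerm 𝒜 P n g₁ k - stableTerm 𝒜 P n g₂ k := by
    simp only [stableTerm, Pi.sub_apply, map_sub]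
  have hu_sub (k : ℕ) : unstableTerm 𝒜 P n (g₁ - g₂) k =
      unstableTerm 𝒜 P n g₁ k - unstableTerm 𝒜 P n g₂ k := by
    simp only [unstableTerm, Pi.sub_apply, map_sub]; abel
  simp only [greenSum, hs_sub, hu_sub, (hs g₁ B₁ hg₁).tsum_sub (hs g₂ B₂ hg₂),
    (hu g₁ B₁ hg₁).tsum_sub (hu g₂ B₂ hg₂)]
  abel

theorem continuous_greenSum [CompleteSpace X] {Y : Type*} [TopologicalSpace Y]
    (hb1 : ∀ m n, n ≤ m →
      ‖(𝒜 m n).comp (P n)‖ ≤ D * Real.exp (-lam * ((m : ℝ) - (n : ℝ))))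
    (hb2 : ∀ m n, m ≤ n →
      ‖(𝒜 m n).comp (ContinuousLinearMap.id ℝ X - P n)‖ ≤
        D * Real.exp (-lam * ((n : ℝ) - (m : ℝ))))
    (hlam : 0 < lam) {G : Y → ℤ → X} (hGc : ∀ j, Continuous fun y => G y j)
    (hGb : ∀ y j, ‖G y j‖ ≤ B) : Continuous fun y => greenSum 𝒜 P n (G y) := by
  have hr₀ := (Real.exp_pos (-lam)).le
  have hr₁ : Real.exp (-lam) < 1 := Real.exp_lt_one_iff.mpr (neg_neg_of_pos hlam)
  have hgeom (C : ℝ) : Summable fun k : ℕ => C * Real.exp (-lam) ^ k :=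
    (summable_geometric_of_lt_one hr₀ hr₁).mul_left C
  refine .sub (continuous_tsum (fun k => ?_) (hgeom _) fun k y => norm_stableTerm_le hb1 (hGb y) k)
    (continuous_tsum (fun k => ?_) (hgeom _) fun k y => norm_unstableTerm_le hb2 (hGb y) k)
  · unfold stableTerm; fun_prop
  · unfold unstableTerm; fun_prop

theorem greenSum_mem {A : ℤ → X ≃L[ℝ] X}
    (hid : ∀ n, 𝒜 n n = ContinuousLinearMap.id ℝ X)
    (hco : ∀ m n, 𝒜 (m + 1) n = (A m : X →L[ℝ] X).comp (𝒜 m n))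
    {S U : ℤ → Submodule ℝ X}
    (hScl : ∀ n, IsClosed (S n : Set X)) (hUcl : ∀ n, IsClosed (U n : Set X))
    (hcompl : ∀ n, IsCompl (S n) (U n))
    (hSinv : ∀ n, ∀ x ∈ S n, A n x ∈ S (n + 1))
    (hUinv : ∀ n, ∀ x ∈ U (n + 1), (A n).symm x ∈ U n)
    (hPran : ∀ n x, P n x ∈ S n)
    (hPS : ∀ n, ∀ x ∈ S n, P n x = x)
    (hPU : ∀ n, ∀ x ∈ U n, P n x = 0) (n : ℤ) (g : ℤ → X) :
    greenSum 𝒜 P n g ∈ S n ⊔ (U (n + 1)).map ((A n).symm.toLinearEquiv.toLinearMap) := by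
  have hstable : ∑' k, stableTerm 𝒜 P n g k ∈ S n :=
    tsum_mem (hScl n) fun k => evolution_mem_of_le hid hco hSinv (by omega) (hPran _ _)
  have hunstable : A n (∑' k, unstableTerm 𝒜 P n g k) ∈ U (n + 1) := by
    rw [ContinuousLinearEquiv.map_tsum]
    refine tsum_mem (hUcl _) fun k => ?_
    have hshift : A n (unstableTerm 𝒜 P n g k) =
        𝒜 (n + 1) (n + 1 + k) (g (n + k) - P (n + 1 + k) (g (n + k))) := by
      rw [unstableTerm, hco]; rfl
    rw [hshift]
    exact evolution_mem_of_ge hid hco hUinv (by omega)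
      (sub_apply_mem_of_isCompl (hcompl _) (hPS _) (hPU _) _)
  exact sub_mem (Submodule.mem_sup_left hstable)
    (Submodule.mem_sup_right (by simpa using hunstable))

end GreenSum

theorem stmt_4_general
    {X : Type*} [NormedAddCommGroup X] [NormedSpace ℝ X] [CompleteSpace X]
    (A : ℤ → X ≃L[ℝ] X) (𝒜 : ℤ → ℤ → X →L[ℝ] X)
    (hid : ∀ n, 𝒜 n n = ContinuousLinearMap.id ℝ X)
    (hco : ∀ m n, 𝒜 (m + 1) n = (A m : X →L[ℝ] X).comp (𝒜 m n))
    (S U : ℤ → Submodule ℝ X)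
    (hScl : ∀ n, IsClosed (S n : Set X)) (hUcl : ∀ n, IsClosed (U n : Set X))
    (hcompl : ∀ n, IsCompl (S n) (U n))
    (hSinv : ∀ n, ∀ x ∈ S n, A n x ∈ S (n + 1))
    (hUinv : ∀ n, ∀ x ∈ U (n + 1), (A n).symm x ∈ U n)
    (P : ℤ → X →L[ℝ] X)
    (hPran : ∀ n x, P n x ∈ S n)
    (hPS : ∀ n, ∀ x ∈ S n, P n x = x)
    (hPU : ∀ n, ∀ x ∈ U n, P n x = 0)
    (D lam : ℝ) (hlam : 0 < lam)
    (hb1 : ∀ m n, n ≤ m →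
      ‖(𝒜 m n).comp (P n)‖ ≤ D * Real.exp (-lam * ((m : ℝ) - (n : ℝ))))
    (hb2 : ∀ m n, m ≤ n →
      ‖(𝒜 m n).comp (ContinuousLinearMap.id ℝ X - P n)‖ ≤
        D * Real.exp (-lam * ((n : ℝ) - (m : ℝ))))
    (f : ℤ → X → X) (c M : ℝ) (hc : 0 ≤ c)
    (hflip : ∀ n x y, ‖f n x - f n y‖ ≤ c * ‖x - y‖)
    (hfbdd : ∀ n x, ‖f n x‖ ≤ M)
    (T : (ℤ → X → X) → (ℤ → X → X))
    (hT : ∀ h n x, T h n x =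
      (∑' k : ℕ, 𝒜 n (n - (k : ℤ))
        (P (n - (k : ℤ))
          (f (n - (k : ℤ) - 1)
            (𝒜 (n - (k : ℤ) - 1) n x + h (n - (k : ℤ) - 1) (𝒜 (n - (k : ℤ) - 1) n x))))) -
      (∑' k : ℕ,
        𝒜 n (n + 1 + (k : ℤ))
          (f (n + (k : ℤ)) (𝒜 (n + (k : ℤ)) n x + h (n + (k : ℤ)) (𝒜 (n + (k : ℤ)) n x)) -
            P (n + 1 + (k : ℤ))
              (f (n + (k : ℤ)) (𝒜 (n + (k : ℤ)) n x + h (n + (k : ℤ)) (𝒜 (n + (k : ℤ)) n x)))))) :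
    (∀ h : ℤ → X → X, MemY A S U h →
      MemY A S U (T h) ∧
      ∀ n x, ‖T h n x‖ ≤ D * (1 + Real.exp (-lam)) / (1 - Real.exp (-lam)) * M) ∧
    (∀ h₁ h₂ : ℤ → X → X, MemY A S U h₁ → MemY A S U h₂ →
      ∀ δ : ℝ, (∀ n x, ‖h₁ n x - h₂ n x‖ ≤ δ) →
        ∀ n x, ‖T h₁ n x - T h₂ n x‖ ≤
          c * D * (1 + Real.exp (-lam)) / (1 - Real.exp (-lam)) * δ) := by
  have hfc (j : ℤ) : Continuous (f j) :=
    (LipschitzWith.of_dist_le' fun x y => by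
      simpa only [dist_eq_norm] using hflip j x y).continuous
  have hTg (h : ℤ → X → X) (n : ℤ) (x : X) :
      T h n x = greenSum 𝒜 P n fun j => f j (𝒜 j n x + h j (𝒜 j n x)) := hT h n x
  have hbound (h : ℤ → X → X) (n : ℤ) (x : X) :
      ‖T h n x‖ ≤ D * (1 + Real.exp (-lam)) / (1 - Real.exp (-lam)) * M :=
    hTg h n x ▸ norm_greenSum_le hb1 hb2 hlam fun j => hfbdd j _
  refine ⟨fun h ⟨hhc, _⟩ => ⟨⟨fun n => ?_, fun n x => ?_, _, hbound h⟩, hbound h⟩,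
    fun h₁ h₂ _ _ δ hδ n x => ?_⟩
  · rw [funext (hTg h n)]
    exact continuous_greenSum hb1 hb2 hlam (fun j => by fun_prop) fun x j => hfbdd j _
  · rw [hTg]
    exact greenSum_mem hid hco hScl hUcl hcompl hSinv hUinv hPran hPS hPU n _
  · rw [hTg, hTg, greenSum_sub hb1 hb2 hlam (fun j => hfbdd j _) fun j => hfbdd j _]
    refine (norm_greenSum_le (B := c * δ) hb1 hb2 hlam fun j => ?_).trans_eq (by ring)
    calc _ ≤ c * ‖(𝒜 j n x + h₁ j (𝒜 j n x)) - (𝒜 j n x + h₂ j (𝒜 j n x))‖ := hflip _ _ _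
      _ ≤ c * δ := by rw [add_sub_add_left_eq_sub]; exact mul_le_mul_of_nonneg_left (hδ _ _) hc

theorem stmt_4
    {X : Type*} [NormedAddCommGroup X] [NormedSpace ℝ X] [CompleteSpace X]
    (A : ℤ → X ≃L[ℝ] X) (𝒜 : ℤ → ℤ → X →L[ℝ] X)
    (hid : ∀ n, 𝒜 n n = ContinuousLinearMap.id ℝ X)
    (hco : ∀ m n, 𝒜 (m + 1) n = (A m : X →L[ℝ] X).comp (𝒜 m n))
    (S U : ℤ → Submodule ℝ X)
    (hScl : ∀ n, IsClosed (S n : Set X)) (hUcl : ∀ n, IsClosed (U n : Set X))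
    (hcompl : ∀ n, IsCompl (S n) (U n))
    (hSinv : ∀ n, ∀ x ∈ S n, A n x ∈ S (n + 1))
    (hUinv : ∀ n, ∀ x ∈ U (n + 1), (A n).symm x ∈ U n)
    (P : ℤ → X →L[ℝ] X)
    (hPran : ∀ n x, P n x ∈ S n)
    (hPS : ∀ n, ∀ x ∈ S n, P n x = x)
    (hPU : ∀ n, ∀ x ∈ U n, P n x = 0)
    (D lam : ℝ) (hD : 0 < D) (hlam : 0 < lam)
    (hb1 : ∀ m n, n ≤ m →
      ‖(𝒜 m n).comp (P n)‖ ≤ D * Real.exp (-lam * ((m : ℝ) - (n : ℝ))))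
    (hb2 : ∀ m n, m ≤ n →
      ‖(𝒜 m n).comp (ContinuousLinearMap.id ℝ X - P n)‖ ≤
        D * Real.exp (-lam * ((n : ℝ) - (m : ℝ))))
    (f : ℤ → X → X) (c M : ℝ) (hc : 0 ≤ c)
    (hflip : ∀ n x y, ‖f n x - f n y‖ ≤ c * ‖x - y‖)
    (hfbdd : ∀ n x, ‖f n x‖ ≤ M)
    (T : (ℤ → X → X) → (ℤ → X → X))
    (hT : ∀ h n x, T h n x =
      (∑' k : ℕ, 𝒜 n (n - (k : ℤ))
        (P (n - (k : ℤ))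
          (f (n - (k : ℤ) - 1)
            (𝒜 (n - (k : ℤ) - 1) n x + h (n - (k : ℤ) - 1) (𝒜 (n - (k : ℤ) - 1) n x))))) -
      (∑' k : ℕ,
        𝒜 n (n + 1 + (k : ℤ))
          (f (n + (k : ℤ)) (𝒜 (n + (k : ℤ)) n x + h (n + (k : ℤ)) (𝒜 (n + (k : ℤ)) n x)) -
            P (n + 1 + (k : ℤ))
              (f (n + (k : ℤ)) (𝒜 (n + (k : ℤ)) n x + h (n + (k : ℤ)) (𝒜 (n + (k : ℤ)) n x)))))) :
    (∀ h : ℤ → X → X, MemY A S U h →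
      MemY A S U (T h) ∧
      ∀ n x, ‖T h n x‖ ≤ D * (1 + Real.exp (-lam)) / (1 - Real.exp (-lam)) * M) ∧
    (∀ h₁ h₂ : ℤ → X → X, MemY A S U h₁ → MemY A S U h₂ →
      ∀ δ : ℝ, (∀ n x, ‖h₁ n x - h₂ n x‖ ≤ δ) →
        ∀ n x, ‖T h₁ n x - T h₂ n x‖ ≤
          c * D * (1 + Real.exp (-lam)) / (1 - Real.exp (-lam)) * δ) :=
  stmt_4_general A 𝒜 hid hco S U hScl hUcl hcompl hSinv hUinv P hPran hPS hPU D lam hlam hb1 hb2 f c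
    M hc hflip hfbdd T hT
end

section
/- (Uniqueness / rigidity in the unperturbed case.) Let (A_n)_{n∈ℤ} admit a generalized exponential dichotomy and let (G_n)_{n∈ℤ} be continuous maps on X satisfying G_{n+1} ∘ A_n = A_n ∘ G_n for all n, sup_n ‖G_n − Id‖_∞ < ∞, and G_n(x) − x ∈ S(n) + A_n^{-1}U(n+1) for every n, x. Then G_n = Id for all n ∈ ℤ. -/
/-!
Fix `x` and `n` and follow the orbit `y m = 𝒜 m n x`. By the conjugacy relation, the defects
`z m = G m (y m) - y m` form a bounded orbit of `(A m)`, and by the hypothesis on `G` each `z m`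
splits as a stable part `P m (z m) ∈ S m` plus a remainder that `A m` carries into `U (m + 1)`.
Both parts are again bounded orbits. A bounded orbit in the stable spaces is at most
`D e^{-λk} C` at time `n`, since it comes from time `n - k`; a bounded orbit in the unstable
spaces obeys the same bound, since it is pulled back from time `n + k`. Hence `z n = G n x - x = 0`.
-/

open Filter Topology

theorem eq_cocycle_apply_of_forall_succ {R X : Type*} [Semiring R] [TopologicalSpace X]
    [AddCommMonoid X] [Module R X] (A : ℤ → X ≃L[R] X) (𝒜 : ℤ → ℤ → X →L[R] X)
    (hid : ∀ n, 𝒜 n n = ContinuousLinearMap.id R X)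
    (hco : ∀ m n, 𝒜 (m + 1) n = (A m : X →L[R] X).comp (𝒜 m n))
    {f : ℤ → X} (hf : ∀ k, f (k + 1) = A k (f k)) (m k : ℤ) : f k = 𝒜 k m (f m) := by
  induction k using Int.inductionOn' (b := m) with
  | zero => simp [hid]
  | succ k _ ih => simp [hf k, ih, hco]
  | pred k _ ih =>
    apply (A (k - 1)).injective
    have hco' := hco (k - 1) m
    rw [sub_add_cancel] at hco'
    rw [← hf, sub_add_cancel, ih, hco']
    rfl

theorem Submodule.sub_apply_mem_of_mem_sup {R X : Type*} [Ring R] [AddCommGroup X] [Module R X]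
    {P : X →ₗ[R] X} {S U V : Submodule R X} (hPS : ∀ x ∈ S, P x = x) (hPU : ∀ x ∈ U, P x = 0)
    (hVU : V ≤ U) {z : X} (hz : z ∈ S ⊔ V) : z - P z ∈ V := by
  obtain ⟨a, ha, b, hb, rfl⟩ := Submodule.mem_sup.mp hz
  simpa [hPS a ha, hPU b (hVU hb)] using hb

theorem eq_zero_of_forall_norm_le_exp_neg {E : Type*} [NormedAddCommGroup E] {x : E}
    {D lam C : ℝ} (hlam : 0 < lam) (h : ∀ k : ℕ, ‖x‖ ≤ D * Real.exp (-lam * k) * C) : x = 0 := by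
  have hlim : Tendsto (fun k : ℕ => D * Real.exp (-lam * k) * C) atTop (𝓝 0) := by
    have hexp : Tendsto (fun k : ℕ => Real.exp (-lam * k)) atTop (𝓝 0) :=
      Real.tendsto_exp_atBot.comp
        (tendsto_natCast_atTop_atTop.const_mul_atTop_of_neg (neg_neg_of_pos hlam))
    simpa using (hexp.const_mul D).mul_const C
  exact norm_le_zero_iff.mp (ge_of_tendsto' hlim h)

section Dichotomy

variable {𝕜 X : Type*} [NontriviallyNormedField 𝕜] [NormedAddCommGroup X] [NormedSpace 𝕜 X]
  (A : ℤ → X ≃L[𝕜] X) (𝒜 : ℤ → ℤ → X →L[𝕜] X)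

theorem eq_zero_of_bounded_stable_orbit
    (hid : ∀ n, 𝒜 n n = ContinuousLinearMap.id 𝕜 X)
    (hco : ∀ m n, 𝒜 (m + 1) n = (A m : X →L[𝕜] X).comp (𝒜 m n))
    {S : ℤ → Submodule 𝕜 X} {D lam : ℝ} (hD : 0 ≤ D) (hlam : 0 < lam)
    (hstab : ∀ m n, n ≤ m → ∀ x ∈ S n,
      ‖𝒜 m n x‖ ≤ D * Real.exp (-lam * ((m : ℝ) - (n : ℝ))) * ‖x‖)
    {s : ℤ → X} (hs : ∀ k, s (k + 1) = A k (s k)) (hsS : ∀ m, s m ∈ S m)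
    {C : ℝ} (hC : ∀ m, ‖s m‖ ≤ C) (n : ℤ) : s n = 0 := by
  refine eq_zero_of_forall_norm_le_exp_neg (D := D) (C := C) hlam fun k => ?_
  have hk : ((n : ℝ) - ((n - k : ℤ) : ℝ)) = k := by push_cast; ring
  calc ‖s n‖ = ‖𝒜 n (n - k) (s (n - k))‖ := by
        rw [← eq_cocycle_apply_of_forall_succ A 𝒜 hid hco hs]
    _ ≤ D * Real.exp (-lam * k) * ‖s (n - k)‖ := by
        simpa only [hk] using hstab n (n - k) (by omega) _ (hsS _)
    _ ≤ D * Real.exp (-lam * k) * C := by gcongr; exact hC _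

theorem eq_zero_of_bounded_unstable_orbit
    (hid : ∀ n, 𝒜 n n = ContinuousLinearMap.id 𝕜 X)
    (hco : ∀ m n, 𝒜 (m + 1) n = (A m : X →L[𝕜] X).comp (𝒜 m n))
    {U : ℤ → Submodule 𝕜 X} {D lam : ℝ} (hD : 0 ≤ D) (hlam : 0 < lam)
    (hunst : ∀ m n, m ≤ n → ∀ x ∈ U n,
      ‖𝒜 m n x‖ ≤ D * Real.exp (-lam * ((n : ℝ) - (m : ℝ))) * ‖x‖)
    {u : ℤ → X} (hu : ∀ k, u (k + 1) = A k (u k)) (huU : ∀ m, u m ∈ U m)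
    {C : ℝ} (hC : ∀ m, ‖u m‖ ≤ C) (n : ℤ) : u n = 0 := by
  refine eq_zero_of_forall_norm_le_exp_neg (D := D) (C := C) hlam fun k => ?_
  have hk : (((n + k : ℤ) : ℝ) - (n : ℝ)) = k := by push_cast; ring
  calc ‖u n‖ = ‖𝒜 n (n + k) (u (n + k))‖ := by
        rw [← eq_cocycle_apply_of_forall_succ A 𝒜 hid hco hu]
    _ ≤ D * Real.exp (-lam * k) * ‖u (n + k)‖ := by
        simpa only [hk] using hunst n (n + k) (by omega) _ (huU _)
    _ ≤ D * Real.exp (-lam * k) * C := by gcongr; exact hC _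

theorem eq_zero_of_bounded_orbit_of_mem_sup
    (hid : ∀ n, 𝒜 n n = ContinuousLinearMap.id 𝕜 X)
    (hco : ∀ m n, 𝒜 (m + 1) n = (A m : X →L[𝕜] X).comp (𝒜 m n))
    {S U : ℤ → Submodule 𝕜 X}
    (hSinv : ∀ n, ∀ x ∈ S n, A n x ∈ S (n + 1))
    (hUinv : ∀ n, ∀ x ∈ U (n + 1), (A n).symm x ∈ U n)
    {D lam : ℝ} (hD : 0 ≤ D) (hlam : 0 < lam)
    (hstab : ∀ m n, n ≤ m → ∀ x ∈ S n,
      ‖𝒜 m n x‖ ≤ D * Real.exp (-lam * ((m : ℝ) - (n : ℝ))) * ‖x‖)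
    (hunst : ∀ m n, m ≤ n → ∀ x ∈ U n,
      ‖𝒜 m n x‖ ≤ D * Real.exp (-lam * ((n : ℝ) - (m : ℝ))) * ‖x‖)
    {P : ℤ → X →L[𝕜] X} (hPran : ∀ n x, P n x ∈ S n)
    (hPS : ∀ n, ∀ x ∈ S n, P n x = x) (hPU : ∀ n, ∀ x ∈ U n, P n x = 0)
    (hPbdd : ∃ C, ∀ n, ‖P n‖ ≤ C)
    {z : ℤ → X} (hz : ∀ k, z (k + 1) = A k (z k))
    (hzmem : ∀ m, z m ∈ S m ⊔ (U (m + 1)).map ((A m).symm.toLinearEquiv.toLinearMap))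
    (hzbdd : ∃ C, ∀ m, ‖z m‖ ≤ C) (n : ℤ) : z n = 0 := by
  obtain ⟨CP, hCP⟩ := hPbdd
  obtain ⟨C, hC⟩ := hzbdd
  set s : ℤ → X := fun m => P m (z m)
  set u : ℤ → X := fun m => z m - s m with hu_def
  have hu_mem (m : ℤ) : u m ∈ (U (m + 1)).map ((A m).symm.toLinearEquiv.toLinearMap) := by
    refine Submodule.sub_apply_mem_of_mem_sup (P := (P m : X →ₗ[𝕜] X)) (hPS m) (hPU m) ?_ (hzmem m)
    rintro _ ⟨v, hv, rfl⟩
    exact hUinv m v hv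
  have huU (m : ℤ) : u m ∈ U m := by
    obtain ⟨v, hv, hvu⟩ := hu_mem m
    rw [← hvu]
    exact hUinv m v hv
  have hAuU (m : ℤ) : A m (u m) ∈ U (m + 1) := by
    obtain ⟨v, hv, hvu⟩ := hu_mem m
    rw [← hvu]
    simpa using hv
  have hs (k : ℤ) : s (k + 1) = A k (s k) := by
    calc s (k + 1) = P (k + 1) (A k (s k) + A k (u k)) := by
          rw [← map_add, add_sub_cancel, ← hz]
      _ = A k (s k) := by
          rw [map_add, hPS _ _ (hSinv k _ (hPran k _)), hPU _ _ (hAuU k), add_zero]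
  have hu (k : ℤ) : u (k + 1) = A k (u k) := by
    simp only [hu_def, hz k, ← hs k, map_sub]
  have hsC (m : ℤ) : ‖s m‖ ≤ CP * C := (P m).le_of_opNorm_le_of_le (hCP m) (hC m)
  have huC (m : ℤ) : ‖u m‖ ≤ C + CP * C := (norm_sub_le _ _).trans (add_le_add (hC m) (hsC m))
  calc z n = s n + u n := (add_sub_cancel _ _).symm
    _ = 0 := by
      rw [eq_zero_of_bounded_stable_orbit A 𝒜 hid hco hD hlam hstab hs (fun m => hPran m _) hsC n,
        eq_zero_of_bounded_unstable_orbit A 𝒜 hid hco hD hlam hunst hu huU huC n, add_zero]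

end Dichotomy

theorem stmt_8_general
    {X : Type*} [NormedAddCommGroup X] [NormedSpace ℝ X]
    (A : ℤ → X ≃L[ℝ] X) (𝒜 : ℤ → ℤ → X →L[ℝ] X)
    (hid : ∀ n, 𝒜 n n = ContinuousLinearMap.id ℝ X)
    (hco : ∀ m n, 𝒜 (m + 1) n = (A m : X →L[ℝ] X).comp (𝒜 m n))
    (S U : ℤ → Submodule ℝ X)
    (hSinv : ∀ n, ∀ x ∈ S n, A n x ∈ S (n + 1))
    (hUinv : ∀ n, ∀ x ∈ U (n + 1), (A n).symm x ∈ U n)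
    (D lam : ℝ) (hD : 0 < D) (hlam : 0 < lam)
    (hstab : ∀ m n, n ≤ m → ∀ x ∈ S n,
      ‖𝒜 m n x‖ ≤ D * Real.exp (-lam * ((m : ℝ) - (n : ℝ))) * ‖x‖)
    (hunst : ∀ m n, m ≤ n → ∀ x ∈ U n,
      ‖𝒜 m n x‖ ≤ D * Real.exp (-lam * ((n : ℝ) - (m : ℝ))) * ‖x‖)
    (P : ℤ → X →L[ℝ] X)
    (hPran : ∀ n x, P n x ∈ S n)
    (hPS : ∀ n, ∀ x ∈ S n, P n x = x)
    (hPU : ∀ n, ∀ x ∈ U n, P n x = 0)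
    (hPbdd : ∃ C, ∀ n, ‖P n‖ ≤ C)
    (G : ℤ → X → X)
    (hGconj : ∀ (n : ℤ) (x : X), G (n + 1) (A n x) = A n (G n x))
    (hGbdd : ∃ C, ∀ (n : ℤ) (x : X), ‖G n x - x‖ ≤ C)
    (hGmem : ∀ (n : ℤ) (x : X),
      G n x - x ∈ S n ⊔ (U (n + 1)).map ((A n).symm.toLinearEquiv.toLinearMap)) :
    ∀ (n : ℤ) (x : X), G n x = x := by
  intro n x
  have hdefect := eq_zero_of_bounded_orbit_of_mem_sup A 𝒜 hid hco hSinv hUinv hD.le hlam hstab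
    hunst hPran hPS hPU hPbdd (z := fun m => G m (𝒜 m n x) - 𝒜 m n x)
    (fun k => by simp [hco, hGconj]) (fun m => hGmem m _)
    (hGbdd.imp fun C hC m => hC m _) n
  simpa [hid, sub_eq_zero] using hdefect

theorem stmt_8
    {X : Type*} [NormedAddCommGroup X] [NormedSpace ℝ X] [CompleteSpace X]
    (A : ℤ → X ≃L[ℝ] X) (𝒜 : ℤ → ℤ → X →L[ℝ] X)
    (hid : ∀ n, 𝒜 n n = ContinuousLinearMap.id ℝ X)
    (hco : ∀ m n, 𝒜 (m + 1) n = (A m : X →L[ℝ] X).comp (𝒜 m n))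
    (S U : ℤ → Submodule ℝ X)
    (hScl : ∀ n, IsClosed (S n : Set X)) (hUcl : ∀ n, IsClosed (U n : Set X))
    (hcompl : ∀ n, IsCompl (S n) (U n))
    (hSinv : ∀ n, ∀ x ∈ S n, A n x ∈ S (n + 1))
    (hUinv : ∀ n, ∀ x ∈ U (n + 1), (A n).symm x ∈ U n)
    (D lam : ℝ) (hD : 0 < D) (hlam : 0 < lam)
    (hstab : ∀ m n, n ≤ m → ∀ x ∈ S n,
      ‖𝒜 m n x‖ ≤ D * Real.exp (-lam * ((m : ℝ) - (n : ℝ))) * ‖x‖)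
    (hunst : ∀ m n, m ≤ n → ∀ x ∈ U n,
      ‖𝒜 m n x‖ ≤ D * Real.exp (-lam * ((n : ℝ) - (m : ℝ))) * ‖x‖)
    (P : ℤ → X →L[ℝ] X)
    (hPran : ∀ n x, P n x ∈ S n)
    (hPS : ∀ n, ∀ x ∈ S n, P n x = x)
    (hPU : ∀ n, ∀ x ∈ U n, P n x = 0)
    (hPbdd : ∃ C, ∀ n, ‖P n‖ ≤ C)
    (G : ℤ → X → X)
    (hGcont : ∀ n, Continuous (G n))
    (hGconj : ∀ (n : ℤ) (x : X), G (n + 1) (A n x) = A n (G n x))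
    (hGbdd : ∃ C, ∀ (n : ℤ) (x : X), ‖G n x - x‖ ≤ C)
    (hGmem : ∀ (n : ℤ) (x : X),
      G n x - x ∈ S n ⊔ (U (n + 1)).map ((A n).symm.toLinearEquiv.toLinearMap)) :
    ∀ (n : ℤ) (x : X), G n x = x :=
  stmt_8_general A 𝒜 hid hco S U hSinv hUinv D lam hD hlam hstab hunst P hPran hPS hPU hPbdd G
    hGconj hGbdd hGmem
end

section
/- (Invariance of the Hölder ball under 𝒯.) With the notation of the generalized Grobman–Hartman construction, suppose ‖𝒜(m,n)‖ ≤ e^{ρ|m−n|}, sup_n ‖f_n‖_∞ ≤ M with M > 1, f_n c-Lipschitz with c ∈ (0,1], and fix α ∈ (0, λ/ρ) and K > 1. Let 𝒴_{α,K} be the set of h ∈ 𝒴 such that ‖h_n(x) − h_n(y)‖ ≤ K‖x−y‖^α for all n, x, y. If 4MDc^α e^{αρ}(1 + e^{−λ+αρ})/(1 − e^{−λ+αρ}) ≤ 1, then 𝒯(𝒴_{α,K}) ⊆ 𝒴_{α,K}. -/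
/-!
Each term of the two series defining `T h` applies a dichotomy operator to a difference
`f (u + h u) - f (v + h v)` with `u - v = 𝒜 m n (x - y)`. Interpolating between the bounds `2M` and
`c‖·‖` for `f` gives `‖f (u + h u) - f (v + h v)‖ ≤ (2 M c^α + c K) ‖u - v‖^α` when `α ≤ 1`, and
the growth bound turns `‖u - v‖^α` into `e^{αρ|m - n|} ‖x - y‖^α`. Against the dichotomy rates
both series become geometric with ratio `e^{-λ + αρ}`, and the smallness condition makes their
sum at most `K ‖x - y‖^α`.

If `α > 1` then `ρ < λ`, and then `X = 0`: a vector `v` in `S 0` or in `U 0` is moved away and back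
by the cocycle, so `‖v‖ ≤ D e^{(ρ - λ) k} ‖v‖` for every `k`.
-/

open Real

theorem min_le_mul_rpow {a s α : ℝ} (ha : 1 ≤ a) (hs : 0 ≤ s) (hα : 0 < α) (hα1 : α ≤ 1) :
    min a s ≤ a * s ^ α := by
  rcases le_total s 1 with hs1 | hs1
  · calc min a s ≤ s := min_le_right _ _
      _ ≤ s ^ α := self_le_rpow_of_le_one hs hs1 hα1
      _ ≤ a * s ^ α := le_mul_of_one_le_left (rpow_nonneg hs α) ha
  · calc min a s ≤ a := min_le_left _ _
      _ ≤ a * s ^ α := le_mul_of_one_le_right (by linarith) (one_le_rpow hs1 hα.le)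

theorem norm_sub_comp_add_self_le {X : Type*} [NormedAddCommGroup X] {f h : X → X} {M c K α : ℝ} (hM : 1 ≤ 2 * M) (hc : 0 ≤ c)
    (hK : 0 ≤ K) (hα : 0 < α) (hα1 : α ≤ 1) (hfb : ∀ u, ‖f u‖ ≤ M)
    (hf : ∀ u v, ‖f u - f v‖ ≤ c * ‖u - v‖) (hh : ∀ u v, ‖h u - h v‖ ≤ K * ‖u - v‖ ^ α)
    (u v : X) :
    ‖f (u + h u) - f (v + h v)‖ ≤ (2 * M * c ^ α + c * K) * ‖u - v‖ ^ α := by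
  set d := ‖u - v‖
  have hd : 0 ≤ d := norm_nonneg _
  have hshift : ‖(u + h u) - (v + h v)‖ ≤ d + K * d ^ α := by
    rw [add_sub_add_comm]
    exact (norm_add_le _ _).trans (add_le_add_right (hh u v) _)
  have hbound : ‖f (u + h u) - f (v + h v)‖ ≤ 2 * M := by
    linarith [norm_sub_le (f (u + h u)) (f (v + h v)), hfb (u + h u), hfb (v + h v)]
  calc ‖f (u + h u) - f (v + h v)‖
      ≤ min (2 * M) (c * d + c * K * d ^ α) := by
        refine le_min hbound ((hf _ _).trans ?_)
        exact (mul_le_mul_of_nonneg_left hshift hc).trans_eq (by ring)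
    _ ≤ min (2 * M) (c * d) + c * K * d ^ α := by
        rw [← min_add_add_right]
        exact min_le_min (le_add_of_nonneg_right (by positivity)) le_rfl
    _ ≤ 2 * M * (c * d) ^ α + c * K * d ^ α := by
        gcongr
        exact min_le_mul_rpow hM (mul_nonneg hc hd) hα hα1
    _ = (2 * M * c ^ α + c * K) * d ^ α := by
        rw [mul_rpow hc hd]; ring

theorem eq_zero_of_norm_le_mul_pow {X : Type*} [NormedAddCommGroup X] {v : X} {C r : ℝ}
    (hr0 : 0 ≤ r) (hr1 : r < 1) (hv : ∀ k : ℕ, ‖v‖ ≤ C * r ^ k) : v = 0 := by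
  have hlim : Filter.Tendsto (fun k : ℕ => C * r ^ k) Filter.atTop (nhds 0) := by
    simpa using (tendsto_pow_atTop_nhds_zero_of_lt_one hr0 hr1).const_mul C
  exact norm_le_zero_iff.mp (ge_of_tendsto' hlim hv)

section Cocycle

variable {X : Type*} [NormedAddCommGroup X] [NormedSpace ℝ X]
  {A : ℤ → X ≃L[ℝ] X} {𝒜 : ℤ → ℤ → X →L[ℝ] X}

theorem cocycle_apply_apply (hid : ∀ n, 𝒜 n n = ContinuousLinearMap.id ℝ X)
    (hco : ∀ m n, 𝒜 (m + 1) n = (A m : X →L[ℝ] X).comp (𝒜 m n)) (m r n : ℤ) (v : X) :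
    𝒜 m r (𝒜 r n v) = 𝒜 m n v := by
  have hstep : ∀ m s (w : X), 𝒜 (m + 1) s w = A m (𝒜 m s w) := fun m s w => by rw [hco]; rfl
  induction m using Int.inductionOn' (b := r) with
  | zero => rw [hid]; rfl
  | succ m _ ih => rw [hstep, hstep, ih]
  | pred m _ ih =>
      apply (A (m - 1)).injective
      rw [← hstep, ← hstep, sub_add_cancel, ih]

theorem norm_le_of_cocycle_of_proj (hid : ∀ n, 𝒜 n n = ContinuousLinearMap.id ℝ X)
    (hco : ∀ m n, 𝒜 (m + 1) n = (A m : X →L[ℝ] X).comp (𝒜 m n)) (Q : X →L[ℝ] X) (m n : ℤ)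
    {v : X} (hv : Q v = v) : ‖v‖ ≤ ‖𝒜 n m‖ * ‖(𝒜 m n).comp Q‖ * ‖v‖ :=
  calc ‖v‖ = ‖𝒜 n m ((𝒜 m n).comp Q v)‖ := by
        rw [ContinuousLinearMap.comp_apply, hv, cocycle_apply_apply hid hco, hid]; rfl
    _ ≤ ‖𝒜 n m‖ * ‖(𝒜 m n).comp Q‖ * ‖v‖ := by
        rw [mul_assoc]
        exact (𝒜 n m).le_opNorm_of_le (((𝒜 m n).comp Q).le_opNorm _)

theorem eq_zero_of_dichotomy_of_growth_lt (hid : ∀ n, 𝒜 n n = ContinuousLinearMap.id ℝ X)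
    (hco : ∀ m n, 𝒜 (m + 1) n = (A m : X →L[ℝ] X).comp (𝒜 m n)) {S U : ℤ → Submodule ℝ X}
    (hcompl : ∀ n, IsCompl (S n) (U n)) {P : ℤ → X →L[ℝ] X}
    (hPS : ∀ n, ∀ x ∈ S n, P n x = x) (hPU : ∀ n, ∀ x ∈ U n, P n x = 0) {D lam ρ : ℝ}
    (hb1 : ∀ m n, n ≤ m →
      ‖(𝒜 m n).comp (P n)‖ ≤ D * Real.exp (-lam * ((m : ℝ) - (n : ℝ))))
    (hb2 : ∀ m n, m ≤ n →
      ‖(𝒜 m n).comp (ContinuousLinearMap.id ℝ X - P n)‖ ≤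
        D * Real.exp (-lam * ((n : ℝ) - (m : ℝ))))
    (hgrow : ∀ m n, ‖𝒜 m n‖ ≤ Real.exp (ρ * |(m : ℝ) - (n : ℝ)|)) (hρlam : ρ < lam) (z : X) :
    z = 0 := by
  have hr1 : exp (ρ - lam) < 1 := exp_lt_one_iff.mpr (by linarith)
  have hpow : ∀ k : ℕ, exp (ρ * k) * exp (-lam * k) = exp (ρ - lam) ^ k := fun k => by
    rw [← exp_add, ← exp_nat_mul]; ring_nf
  have hcontract : ∀ (Q : X →L[ℝ] X) (m : ℕ → ℤ), (∀ k, |(m k : ℝ)| = k) →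
      (∀ k : ℕ, ‖(𝒜 (m k) 0).comp Q‖ ≤ D * exp (-lam * k)) → ∀ v, Q v = v → v = 0 := by
    intro Q m hm hQ v hv
    refine eq_zero_of_norm_le_mul_pow (exp_pos _).le hr1 (C := D * ‖v‖) fun k => ?_
    calc ‖v‖ ≤ ‖𝒜 0 (m k)‖ * ‖(𝒜 (m k) 0).comp Q‖ * ‖v‖ :=
          norm_le_of_cocycle_of_proj hid hco Q (m k) 0 hv
      _ ≤ exp (ρ * k) * (D * exp (-lam * k)) * ‖v‖ := by
          have hgrow_k : ‖𝒜 0 (m k)‖ ≤ exp (ρ * k) := by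
            simpa [abs_sub_comm, hm k] using hgrow 0 (m k)
          gcongr
          exact hQ k
      _ = D * ‖v‖ * exp (ρ - lam) ^ k := by rw [← hpow]; ring
  have hz : z ∈ S 0 ⊔ U 0 := (hcompl 0).sup_eq_top ▸ Submodule.mem_top
  obtain ⟨s, hs, u, hu, rfl⟩ := Submodule.mem_sup.mp hz
  have hs0 : s = 0 := hcontract (P 0) (fun k => k) (fun k => by simp) (fun k => by
    simpa using hb1 k 0 (by positivity)) s (hPS 0 s hs)
  have hu0 : u = 0 := hcontract (ContinuousLinearMap.id ℝ X - P 0) (fun k => -k)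
    (fun k => by simp) (fun k => by simpa using hb2 (-k) 0 (by simp)) u (by simp [hPU 0 u hu])
  rw [hs0, hu0, add_zero]

end Cocycle

section DichotomyBounds

variable {X : Type*} [NormedAddCommGroup X] [NormedSpace ℝ X]
  {𝒜 : ℤ → ℤ → X →L[ℝ] X} {P : ℤ → X →L[ℝ] X} {D lam ρ : ℝ}

theorem norm_stable_part_le
    (hb1 : ∀ m n, n ≤ m →
      ‖(𝒜 m n).comp (P n)‖ ≤ D * Real.exp (-lam * ((m : ℝ) - (n : ℝ))))
    (n : ℤ) (k : ℕ) : ‖(𝒜 n (n - k)).comp (P (n - k))‖ ≤ D * exp (-lam * k) := by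
  have e : (n : ℝ) - ((n - k : ℤ) : ℝ) = k := by push_cast; ring
  exact e ▸ hb1 n (n - k) (by omega)

theorem norm_unstable_part_le
    (hb2 : ∀ m n, m ≤ n →
      ‖(𝒜 m n).comp (ContinuousLinearMap.id ℝ X - P n)‖ ≤
        D * Real.exp (-lam * ((n : ℝ) - (m : ℝ))))
    (n : ℤ) (k : ℕ) :
    ‖(𝒜 n (n + 1 + k)).comp (ContinuousLinearMap.id ℝ X - P (n + 1 + k))‖ ≤
      D * exp (-lam * (k + 1)) := by
  have e : ((n + 1 + k : ℤ) : ℝ) - n = k + 1 := by push_cast; ring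
  exact e ▸ hb2 n (n + 1 + k) (by omega)

theorem norm_cocycle_past_le (hgrow : ∀ m n, ‖𝒜 m n‖ ≤ Real.exp (ρ * |(m : ℝ) - (n : ℝ)|))
    (n : ℤ) (k : ℕ) : ‖𝒜 (n - k - 1) n‖ ≤ exp (ρ * (k + 1)) := by
  have e : |((n - k - 1 : ℤ) : ℝ) - n| = k + 1 := by
    push_cast
    rw [abs_of_nonpos (by linarith [k.cast_nonneg (α := ℝ)])]
    ring
  exact e ▸ hgrow (n - k - 1) n

theorem norm_cocycle_future_le (hgrow : ∀ m n, ‖𝒜 m n‖ ≤ Real.exp (ρ * |(m : ℝ) - (n : ℝ)|))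
    (n : ℤ) (k : ℕ) : ‖𝒜 (n + k) n‖ ≤ exp (ρ * k) := by
  simpa using hgrow (n + k) n

end DichotomyBounds

section Series

variable {X : Type*} [NormedAddCommGroup X] [NormedSpace ℝ X] [CompleteSpace X]

theorem norm_tsum_sub_tsum_le (B L : ℕ → X →L[ℝ] X) (F : ℕ → X → X) {M G α γ q : ℝ}
    (hq0 : 0 ≤ q) (hq1 : q < 1) (hα : 0 ≤ α) (hG : 0 ≤ G) (hB : Summable fun k => ‖B k‖)
    (hFb : ∀ k u, ‖F k u‖ ≤ M) (hF : ∀ k u v, ‖F k u - F k v‖ ≤ G * ‖u - v‖ ^ α)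
    (hBL : ∀ k, ‖B k‖ * ‖L k‖ ^ α ≤ γ * q ^ k) (x y : X) :
    ‖∑' k, B k (F k (L k x)) - ∑' k, B k (F k (L k y))‖ ≤ G * γ * ‖x - y‖ ^ α / (1 - q) := by
  have hsum : ∀ z, Summable fun k => B k (F k (L k z)) := fun z =>
    (hB.mul_right M).of_norm_bounded fun k =>
      (B k).le_opNorm_of_le (hFb k _)
  have hterm : ∀ k, ‖B k (F k (L k x)) - B k (F k (L k y))‖
      ≤ G * γ * ‖x - y‖ ^ α * q ^ k := fun k =>
    calc ‖B k (F k (L k x)) - B k (F k (L k y))‖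
        ≤ ‖B k‖ * (G * ‖L k (x - y)‖ ^ α) := by
          rw [← map_sub, map_sub (L k)]
          exact (B k).le_opNorm_of_le (hF k _ _)
      _ ≤ ‖B k‖ * (G * (‖L k‖ * ‖x - y‖) ^ α) := by
          gcongr; exact (L k).le_opNorm _
      _ = G * ‖x - y‖ ^ α * (‖B k‖ * ‖L k‖ ^ α) := by
          rw [mul_rpow (norm_nonneg _) (norm_nonneg _)]; ring
      _ ≤ G * ‖x - y‖ ^ α * (γ * q ^ k) := mul_le_mul_of_nonneg_left (hBL k) (by positivity)
      _ = G * γ * ‖x - y‖ ^ α * q ^ k := by ring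
  rw [← (hsum x).tsum_sub (hsum y), div_eq_mul_inv]
  exact tsum_of_norm_bounded ((hasSum_geometric_of_lt_one hq0 hq1).mul_left _) hterm

theorem norm_tsum_sub_tsum_le_of_exp (B L : ℕ → X →L[ℝ] X) (F : ℕ → X → X)
    {M G α D lam ρ a b : ℝ} (hα : 0 ≤ α) (hG : 0 ≤ G) (hlam : 0 < lam) (hαρ : α * ρ < lam)
    (hB : ∀ k : ℕ, ‖B k‖ ≤ D * exp (-lam * (k + a))) (hL : ∀ k : ℕ, ‖L k‖ ≤ exp (ρ * (k + b)))
    (hFb : ∀ k u, ‖F k u‖ ≤ M) (hF : ∀ k u v, ‖F k u - F k v‖ ≤ G * ‖u - v‖ ^ α) (x y : X) :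
    ‖∑' k, B k (F k (L k x)) - ∑' k, B k (F k (L k y))‖ ≤
      G * (D * exp (-lam * a + α * ρ * b)) * ‖x - y‖ ^ α / (1 - exp (-lam + α * ρ)) := by
  have hexp : ∀ (s t : ℝ) (k : ℕ), exp (s + k * t) = exp s * exp t ^ k := fun s t k => by
    rw [exp_add, exp_nat_mul]
  have hq1 : exp (-lam + α * ρ) < 1 := exp_lt_one_iff.mpr (by linarith)
  refine norm_tsum_sub_tsum_le B L F (γ := D * exp (-lam * a + α * ρ * b)) (exp_pos _).le hq1 hα
    hG ?_ hFb hF (fun k => ?_) x y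
  · refine .of_nonneg_of_le (fun k => norm_nonneg _) hB ?_
    simp_rw [show ∀ k : ℕ, -lam * (k + a) = -lam * a + k * -lam from fun k => by ring, hexp]
    have hr1 : exp (-lam) < 1 := exp_lt_one_iff.mpr (by linarith)
    simpa only [mul_assoc] using
      (summable_geometric_of_lt_one (exp_pos _).le hr1).mul_left (D * exp (-lam * a))
  · calc ‖B k‖ * ‖L k‖ ^ α ≤ D * exp (-lam * (k + a)) * exp (ρ * (k + b)) ^ α :=
          mul_le_mul (hB k) (rpow_le_rpow (norm_nonneg _) (hL k) hα) (by positivity)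
            ((norm_nonneg _).trans (hB k))
      _ = D * exp (-lam * a + α * ρ * b) * exp (-lam + α * ρ) ^ k := by
          rw [← exp_mul, mul_assoc, ← exp_add, mul_assoc D, ← hexp]; ring_nf

end Series

theorem holder_constant_le {D M c K α ρ lam : ℝ} (hD : 0 < D) (hc0 : 0 < c) (hc1 : c ≤ 1)
    (hM : 1 < M) (hK : 1 < K) (hα1 : α ≤ 1) (hαρ : 0 ≤ α * ρ) (hq : exp (-lam + α * ρ) < 1)
    (hsmall : 4 * M * D * c ^ α * Real.exp (α * ρ) *
      (1 + Real.exp (-lam + α * ρ)) / (1 - Real.exp (-lam + α * ρ)) ≤ 1) :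
    (2 * M * c ^ α + c * K) * D * (exp (α * ρ) + exp (-lam)) ≤ K * (1 - exp (-lam + α * ρ)) := by
  set q := exp (-lam + α * ρ)
  have hcα : c ≤ c ^ α := self_le_rpow_of_le_one hc0.le hc1 hα1
  have hG : 2 * M * c ^ α + c * K ≤ c ^ α * (4 * M * K) := by
    nlinarith [mul_pos (sub_pos.mpr hM) (sub_pos.mpr hK), rpow_nonneg hc0.le α]
  have hE : exp (α * ρ) + exp (-lam) ≤ exp (α * ρ) * (1 + q) := by
    have : exp (-lam) ≤ exp (α * ρ) * q := by
      rw [← exp_add]; exact exp_le_exp.mpr (by linarith)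
    linarith
  have hsmall' := (div_le_one (by linarith)).mp hsmall
  calc (2 * M * c ^ α + c * K) * D * (exp (α * ρ) + exp (-lam))
      ≤ c ^ α * (4 * M * K) * D * (exp (α * ρ) * (1 + q)) := by
        gcongr
    _ = K * (4 * M * D * c ^ α * exp (α * ρ) * (1 + q)) := by ring
    _ ≤ K * (1 - q) := mul_le_mul_of_nonneg_left hsmall' (by linarith)

theorem stmt_15_general
    {X : Type*} [NormedAddCommGroup X] [NormedSpace ℝ X] [CompleteSpace X]
    (A : ℤ → X ≃L[ℝ] X) (𝒜 : ℤ → ℤ → X →L[ℝ] X)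
    (hid : ∀ n, 𝒜 n n = ContinuousLinearMap.id ℝ X)
    (hco : ∀ m n, 𝒜 (m + 1) n = (A m : X →L[ℝ] X).comp (𝒜 m n))
    (S U : ℤ → Submodule ℝ X)
    (hcompl : ∀ n, IsCompl (S n) (U n))
    (P : ℤ → X →L[ℝ] X)
    (hPS : ∀ n, ∀ x ∈ S n, P n x = x)
    (hPU : ∀ n, ∀ x ∈ U n, P n x = 0)
    (D lam ρ : ℝ) (hD : 0 < D) (hlam : 0 < lam) (hρ : 0 < ρ)
    (hb1 : ∀ m n, n ≤ m →
      ‖(𝒜 m n).comp (P n)‖ ≤ D * Real.exp (-lam * ((m : ℝ) - (n : ℝ))))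
    (hb2 : ∀ m n, m ≤ n →
      ‖(𝒜 m n).comp (ContinuousLinearMap.id ℝ X - P n)‖ ≤
        D * Real.exp (-lam * ((n : ℝ) - (m : ℝ))))
    (hgrow : ∀ m n, ‖𝒜 m n‖ ≤ Real.exp (ρ * |(m : ℝ) - (n : ℝ)|))
    (f : ℤ → X → X) (c M : ℝ) (hc0 : 0 < c) (hc1 : c ≤ 1) (hM : 1 < M)
    (hflip : ∀ n x y, ‖f n x - f n y‖ ≤ c * ‖x - y‖)
    (hfbdd : ∀ n x, ‖f n x‖ ≤ M)
    (α K : ℝ) (hα : 0 < α) (hαρ : α * ρ < lam) (hK : 1 < K)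
    (hsmall : 4 * M * D * c ^ α * Real.exp (α * ρ) *
      (1 + Real.exp (-lam + α * ρ)) / (1 - Real.exp (-lam + α * ρ)) ≤ 1)
    (T : (ℤ → X → X) → (ℤ → X → X))
    (hT : ∀ h n x, T h n x =
      (∑' k : ℕ, 𝒜 n (n - (k : ℤ))
        (P (n - (k : ℤ))
          (f (n - (k : ℤ) - 1)
            (𝒜 (n - (k : ℤ) - 1) n x + h (n - (k : ℤ) - 1) (𝒜 (n - (k : ℤ) - 1) n x))))) -
      (∑' k : ℕ,
        𝒜 n (n + 1 + (k : ℤ))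
          (f (n + (k : ℤ)) (𝒜 (n + (k : ℤ)) n x + h (n + (k : ℤ)) (𝒜 (n + (k : ℤ)) n x)) -
            P (n + 1 + (k : ℤ))
              (f (n + (k : ℤ)) (𝒜 (n + (k : ℤ)) n x + h (n + (k : ℤ)) (𝒜 (n + (k : ℤ)) n x)))))) :
    ∀ h : ℤ → X → X, MemY A S U h →
      (∀ (n : ℤ) (x y : X), ‖h n x - h n y‖ ≤ K * ‖x - y‖ ^ α) →
      ∀ (n : ℤ) (x y : X), ‖T h n x - T h n y‖ ≤ K * ‖x - y‖ ^ α := by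
  intro h _ hH n x y
  rcases le_or_gt α 1 with hα1 | hα1
  swap
  · rw [eq_zero_of_dichotomy_of_growth_lt hid hco hcompl hPS hPU hb1 hb2 hgrow (by nlinarith)
      (T h n x - T h n y), norm_zero]
    positivity
  set G := 2 * M * c ^ α + c * K
  have hG : 0 ≤ G := by positivity
  have hF : ∀ j u v, ‖f j (u + h j u) - f j (v + h j v)‖ ≤ G * ‖u - v‖ ^ α := fun j =>
    norm_sub_comp_add_self_le (by linarith) hc0.le (by linarith) hα hα1 (hfbdd j) (hflip j) (hH j)
  have est1 := norm_tsum_sub_tsum_le_of_exp _ _ (fun k u => f (n - k - 1) (u + h (n - k - 1) u))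
    hα.le hG hlam hαρ (a := 0) (fun k => by simpa using norm_stable_part_le hb1 n k)
    (norm_cocycle_past_le hgrow n) (fun _ _ => hfbdd _ _) (fun _ => hF _) x y
  have est2 := norm_tsum_sub_tsum_le_of_exp _ _ (fun k u => f (n + k) (u + h (n + k) u))
    hα.le hG hlam hαρ (norm_unstable_part_le hb2 n) (b := 0)
    (fun k => by simpa using norm_cocycle_future_le hgrow n k) (fun _ _ => hfbdd _ _)
    (fun _ => hF _) x y
  have hq1 : exp (-lam + α * ρ) < 1 := exp_lt_one_iff.mpr (by linarith)
  rw [hT, hT, sub_sub_sub_comm]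
  calc _ ≤ _ := norm_sub_le _ _
    _ ≤ _ := add_le_add est1 est2
    _ = G * D * (exp (α * ρ) + exp (-lam)) * ‖x - y‖ ^ α / (1 - exp (-lam + α * ρ)) := by
        simp only [mul_zero, mul_one, zero_add, add_zero]; ring
    _ ≤ K * (1 - exp (-lam + α * ρ)) * ‖x - y‖ ^ α / (1 - exp (-lam + α * ρ)) := by
        gcongr ?_ * _ / _
        exact holder_constant_le hD hc0 hc1 hM hK hα1 (by positivity) hq1 hsmall
    _ = K * ‖x - y‖ ^ α := by field_simp [(sub_pos.mpr hq1).ne']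

theorem stmt_15
    {X : Type*} [NormedAddCommGroup X] [NormedSpace ℝ X] [CompleteSpace X]
    (A : ℤ → X ≃L[ℝ] X) (𝒜 : ℤ → ℤ → X →L[ℝ] X)
    (hid : ∀ n, 𝒜 n n = ContinuousLinearMap.id ℝ X)
    (hco : ∀ m n, 𝒜 (m + 1) n = (A m : X →L[ℝ] X).comp (𝒜 m n))
    (S U : ℤ → Submodule ℝ X)
    (hcompl : ∀ n, IsCompl (S n) (U n))
    (hSinv : ∀ n, ∀ x ∈ S n, A n x ∈ S (n + 1))
    (hUinv : ∀ n, ∀ x ∈ U (n + 1), (A n).symm x ∈ U n)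
    (P : ℤ → X →L[ℝ] X)
    (hPran : ∀ n x, P n x ∈ S n)
    (hPS : ∀ n, ∀ x ∈ S n, P n x = x)
    (hPU : ∀ n, ∀ x ∈ U n, P n x = 0)
    (D lam ρ : ℝ) (hD : 0 < D) (hlam : 0 < lam) (hρ : 0 < ρ)
    (hb1 : ∀ m n, n ≤ m →
      ‖(𝒜 m n).comp (P n)‖ ≤ D * Real.exp (-lam * ((m : ℝ) - (n : ℝ))))
    (hb2 : ∀ m n, m ≤ n →
      ‖(𝒜 m n).comp (ContinuousLinearMap.id ℝ X - P n)‖ ≤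
        D * Real.exp (-lam * ((n : ℝ) - (m : ℝ))))
    (hgrow : ∀ m n, ‖𝒜 m n‖ ≤ Real.exp (ρ * |(m : ℝ) - (n : ℝ)|))
    (f : ℤ → X → X) (c M : ℝ) (hc0 : 0 < c) (hc1 : c ≤ 1) (hM : 1 < M)
    (hflip : ∀ n x y, ‖f n x - f n y‖ ≤ c * ‖x - y‖)
    (hfbdd : ∀ n x, ‖f n x‖ ≤ M)
    (α K : ℝ) (hα : 0 < α) (hαρ : α * ρ < lam) (hK : 1 < K)
    (hsmall : 4 * M * D * c ^ α * Real.exp (α * ρ) *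
      (1 + Real.exp (-lam + α * ρ)) / (1 - Real.exp (-lam + α * ρ)) ≤ 1)
    (T : (ℤ → X → X) → (ℤ → X → X))
    (hT : ∀ h n x, T h n x =
      (∑' k : ℕ, 𝒜 n (n - (k : ℤ))
        (P (n - (k : ℤ))
          (f (n - (k : ℤ) - 1)
            (𝒜 (n - (k : ℤ) - 1) n x + h (n - (k : ℤ) - 1) (𝒜 (n - (k : ℤ) - 1) n x))))) -
      (∑' k : ℕ,
        𝒜 n (n + 1 + (k : ℤ))
          (f (n + (k : ℤ)) (𝒜 (n + (k : ℤ)) n x + h (n + (k : ℤ)) (𝒜 (n + (k : ℤ)) n x)) -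
            P (n + 1 + (k : ℤ))
              (f (n + (k : ℤ)) (𝒜 (n + (k : ℤ)) n x + h (n + (k : ℤ)) (𝒜 (n + (k : ℤ)) n x)))))) :
    ∀ h : ℤ → X → X, MemY A S U h →
      (∀ (n : ℤ) (x y : X), ‖h n x - h n y‖ ≤ K * ‖x - y‖ ^ α) →
      ∀ (n : ℤ) (x y : X), ‖T h n x - T h n y‖ ≤ K * ‖x - y‖ ^ α :=
  stmt_15_general A 𝒜 hid hco S U hcompl P hPS hPU D lam ρ hD hlam hρ hb1 hb2 hgrow f c M hc0 hc1 hM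
    hflip hfbdd α K hα hαρ hK hsmall T hT
end

section
/- Let S_ω be the bilateral weighted left shift on X = ℓ^p(ℤ) (1 ≤ p < ∞) or c₀(ℤ) with bounded weights ω = (ω_n) satisfying inf_n |ω_n| > 0. Suppose limsup_{n→∞} sup_{k∈ℕ} |ω_{-k}ω_{-k-1}⋯ω_{-k-n}|^{1/n} < 1 and liminf_{n→∞} inf_{k∈ℕ} |ω_k ω_{k+1}⋯ω_{k+n}|^{1/n} > 1. Then S_ω is a generalized hyperbolic operator with respect to the splitting X = E^s ⊕ E^u, where E^s = {x : x_n = 0 for n > 0} and E^u = {x : x_n = 0 for n ≤ 0}: i.e., S_ω(E^s) ⊆ E^s, S_ω^{-1}(E^u) ⊆ E^u, and the restrictions S_ω|_{E^s} and S_ω^{-1}|_{E^u} are uniform exponential contractions. -/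
/-!
Coordinatewise, `(S_ω^m x)_n = ω_{n+1}⋯ω_{n+m} x_{n+m}` and
`(S_ω^{-m} x)_{n+m} = x_n / ω_{n+1}⋯ω_{n+m}`. For `x ∈ E^s` only the indices with `n + m ≤ 0`
contribute, and there the limsup hypothesis bounds the product of the `m` weights by `r^{m-1}`;
for `x ∈ E^u` only `n > 0` contributes, and there the liminf hypothesis bounds it below by
`R^{m-1}`. A shift of indices does not change the `ℓ^p` norm, so both `S_ω^m` on `E^s` and
`S_ω^{-m}` on `E^u` have norm at most `ρ^{m-1}` for large `m`, where `ρ = max r R⁻¹ < 1`; the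
finitely many small `m` only enlarge the constant `D`.
-/

open scoped ENNReal NNReal
open Finset

namespace lp

variable {α F : Type*} [NormedAddCommGroup F] {p : ℝ≥0∞}

lemma norm_le_mul_norm_of_le_comp (hp : p ≠ 0) {e : α → α} (he : Function.Injective e)
    {f g : lp (fun _ : α => F) p} {C : ℝ} (hC : 0 ≤ C) (h : ∀ i, ‖g i‖ ≤ C * ‖f (e i)‖) :
    ‖g‖ ≤ C * ‖f‖ := by
  obtain (rfl | rfl | hp) := p.trichotomy
  · exact (hp rfl).elim
  · exact norm_le_of_forall_le (mul_nonneg hC (norm_nonneg' f)) fun i =>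
      (h i).trans (by gcongr; exact norm_apply_le_norm hp f (e i))
  · refine norm_le_of_forall_sum_le hp (mul_nonneg hC (norm_nonneg' f)) fun s => ?_
    calc ∑ i ∈ s, ‖g i‖ ^ p.toReal
        ≤ ∑ i ∈ s, (C * ‖f (e i)‖) ^ p.toReal := by gcongr with i; exact h i
      _ = C ^ p.toReal * ∑ i ∈ s.map ⟨e, he⟩, ‖f i‖ ^ p.toReal := by
        simp only [Real.mul_rpow hC (norm_nonneg _), mul_sum, sum_map,
          Function.Embedding.coeFn_mk]
      _ ≤ C ^ p.toReal * ‖f‖ ^ p.toReal := by gcongr; exact sum_rpow_le_norm_rpow hp f _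
      _ = (C * ‖f‖) ^ p.toReal := (Real.mul_rpow hC (norm_nonneg' f)).symm

noncomputable def indicator (s : Set α) (x : lp (fun _ : α => F) p) : lp (fun _ : α => F) p :=
  ⟨s.indicator (x ·), (lp.memℓp x).mono' fun _ => norm_indicator_le_norm_self _ _⟩

lemma indicator_apply (s : Set α) [DecidablePred (· ∈ s)] (x : lp (fun _ : α => F) p) (i : α) :
    indicator s x i = if i ∈ s then x i else 0 :=
  Set.indicator_apply s _ i

lemma existsUnique_add_of_forall_mem_eq_zero (s : Set α) (x : lp (fun _ : α => F) p) :
    ∃! y : lp (fun _ : α => F) p × lp (fun _ : α => F) p,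
      (∀ i ∈ s, y.1 i = 0) ∧ (∀ i ∈ sᶜ, y.2 i = 0) ∧ x = y.1 + y.2 := by
  classical
  refine ⟨(indicator sᶜ x, indicator s x), ⟨fun i hi => ?_, fun i hi => ?_, ?_⟩, ?_⟩
  · simp [indicator_apply, hi]
  · simp_all [indicator_apply]
  · ext i
    by_cases hi : i ∈ s <;> simp only [coeFn_add, Pi.add_apply, indicator_apply, hi] <;> simp [hi]
  · rintro ⟨y, z⟩ ⟨hy, hz, rfl⟩
    refine Prod.ext ?_ ?_ <;> ext i <;> rw [indicator_apply] <;> by_cases hi : i ∈ s <;>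
      simp_all

lemma isClosed_setOf_forall_mem_eq_zero [Fact (1 ≤ p)] (s : Set α) :
    IsClosed {x : lp (fun _ : α => F) p | ∀ i ∈ s, x i = 0} := by
  simp only [Set.ofPred_forall]
  exact isClosed_biInter fun i _ =>
    isClosed_eq (lipschitzWith_one_eval p i).continuous continuous_const

end lp

lemma exists_norm_iterate_le_mul_pow {E : Type*} [SeminormedAddCommGroup E] {f : E → E}
    {K : ℝ≥0} (hf : LipschitzWith K f) (hf0 : f 0 = 0) {s : Set E} {ρ : ℝ} (hρ0 : 0 < ρ)
    (hρ1 : ρ ≤ 1) {N : ℕ} (h : ∀ x ∈ s, ∀ j ≥ N, ‖f^[j + 1] x‖ ≤ ρ ^ j * ‖x‖) :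
    ∃ D, ∀ x ∈ s, ∀ m : ℕ, ‖f^[m] x‖ ≤ D * ρ ^ m * ‖x‖ := by
  set L := max (K : ℝ) 1
  refine ⟨max ρ⁻¹ (L ^ N / ρ ^ N), fun x hx m => ?_⟩
  rcases le_or_gt m N with hm | hm
  · have hLip : ‖f^[m] x‖ ≤ K ^ m * ‖x‖ := by
      simpa [Function.iterate_fixed hf0] using (hf.iterate m).dist_le_mul x 0
    have hKL : (K : ℝ) ^ m * ρ ^ N ≤ L ^ N * ρ ^ m := by
      gcongr ?_ * ?_
      · exact (pow_le_pow_left₀ K.coe_nonneg (le_max_left _ _) m).trans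
          (pow_le_pow_right₀ (le_max_right _ _) hm)
      · exact pow_le_pow_of_le_one hρ0.le hρ1 hm
    calc ‖f^[m] x‖ ≤ K ^ m * ‖x‖ := hLip
      _ ≤ L ^ N / ρ ^ N * ρ ^ m * ‖x‖ := by
        gcongr
        rwa [div_mul_eq_mul_div, le_div_iff₀ (by positivity)]
      _ ≤ max ρ⁻¹ (L ^ N / ρ ^ N) * ρ ^ m * ‖x‖ := by gcongr; exact le_max_right _ _
  · obtain ⟨j, rfl⟩ : ∃ j, m = j + 1 := ⟨m - 1, by omega⟩
    calc ‖f^[j + 1] x‖ ≤ ρ ^ j * ‖x‖ := h x hx j (by omega)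
      _ = ρ⁻¹ * ρ ^ (j + 1) * ‖x‖ := by field_simp; ring
      _ ≤ max ρ⁻¹ (L ^ N / ρ ^ N) * ρ ^ (j + 1) * ‖x‖ := by gcongr; exact le_max_left _ _

lemma abs_le_pow_of_rpow_one_div_le {a r : ℝ} {n : ℕ} (hn : n ≠ 0)
    (h : |a| ^ (1 / (n : ℝ)) ≤ r) : |a| ≤ r ^ n := by
  rw [← Real.rpow_inv_natCast_pow (abs_nonneg a) hn, ← one_div]
  exact pow_le_pow_left₀ (by positivity) h n

lemma pow_le_abs_of_le_rpow_one_div {a R : ℝ} (hR : 0 ≤ R) {n : ℕ} (hn : n ≠ 0)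
    (h : R ≤ |a| ^ (1 / (n : ℝ))) : R ^ n ≤ |a| := by
  rw [← Real.rpow_inv_natCast_pow (abs_nonneg a) hn, ← one_div]
  exact pow_le_pow_left₀ hR h n

section WeightedShift

variable {p : ℝ≥0∞} [Fact (1 ≤ p)] {ω : ℤ → ℝ}
  {S : lp (fun _ : ℤ => ℝ) p ≃L[ℝ] lp (fun _ : ℤ => ℝ) p}

lemma weight_ne_zero (hS : ∀ x n, S x n = ω (n + 1) * x (n + 1)) (n : ℤ) : ω n ≠ 0 := by
  intro h
  have := hS (S.symm (lp.single p (n - 1) 1)) (n - 1)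
  simp [h] at this

lemma iterate_apply (hS : ∀ x n, S x n = ω (n + 1) * x (n + 1)) (x : lp (fun _ : ℤ => ℝ) p)
    (m : ℕ) (n : ℤ) : (S^[m] x) n = (∏ i ∈ range m, ω (n + 1 + i)) * x (n + m) := by
  induction m generalizing x with
  | zero => simp
  | succ m ih =>
    rw [Function.iterate_succ_apply, ih, hS, prod_range_succ, mul_assoc]
    push_cast
    ring_nf

lemma apply_eq_zero_of_forall_pos_eq_zero (hS : ∀ x n, S x n = ω (n + 1) * x (n + 1))
    {x : lp (fun _ : ℤ => ℝ) p} (hx : ∀ n : ℤ, 0 < n → x n = 0) {n : ℤ} (hn : 0 < n) :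
    S x n = 0 := by
  rw [hS, hx (n + 1) (by omega), mul_zero]

lemma symm_apply_eq_zero_of_forall_nonpos_eq_zero (hS : ∀ x n, S x n = ω (n + 1) * x (n + 1))
    {x : lp (fun _ : ℤ => ℝ) p} (hx : ∀ n : ℤ, n ≤ 0 → x n = 0) {n : ℤ} (hn : n ≤ 0) :
    S.symm x n = 0 := by
  have h := hS (S.symm x) (n - 1)
  rw [S.apply_symm_apply, sub_add_cancel, hx (n - 1) (by omega)] at h
  exact (mul_eq_zero.1 h.symm).resolve_left (weight_ne_zero hS n)

lemma symm_iterate_apply_add (hS : ∀ x n, S x n = ω (n + 1) * x (n + 1))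
    (x : lp (fun _ : ℤ => ℝ) p) (m : ℕ) (n : ℤ) :
    (S.symm^[m] x) (n + m) = x n / ∏ i ∈ range m, ω (n + 1 + i) := by
  have h := iterate_apply hS (S.symm^[m] x) m n
  rw [Function.LeftInverse.iterate S.apply_symm_apply m x] at h
  rw [h, mul_div_cancel_left₀ _ (prod_ne_zero_iff.2 fun i _ => weight_ne_zero hS _)]

lemma abs_prod_weight_le {r : ℝ} {N : ℕ}
    (hr : ∀ n ≥ N, ∀ k : ℕ, |∏ i ∈ range (n + 1), ω (-(k : ℤ) - i)| ^ (1 / (n : ℝ)) ≤ r)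
    {j : ℕ} (hj : N ≤ j) (hj0 : j ≠ 0) {n : ℤ} (hn : n + (j + 1 : ℕ) ≤ 0) :
    |∏ i ∈ range (j + 1), ω (n + 1 + i)| ≤ r ^ j := by
  obtain ⟨k, hk⟩ : ∃ k : ℕ, (k : ℤ) = -(n + (j + 1 : ℕ)) := ⟨_, Int.toNat_of_nonneg (by omega)⟩
  have hreflect : ∏ i ∈ range (j + 1), ω (n + 1 + i) = ∏ i ∈ range (j + 1), ω (-(k : ℤ) - i) := by
    rw [← prod_range_reflect]
    refine prod_congr rfl fun i hi => congrArg ω ?_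
    have := mem_range.1 hi
    push_cast at hk ⊢
    omega
  exact hreflect ▸ abs_le_pow_of_rpow_one_div_le hj0 (hr j hj k)

lemma pow_le_abs_prod_weight {R : ℝ} (hR : 0 ≤ R) {N : ℕ}
    (hR' : ∀ n ≥ N, ∀ k : ℕ, R ≤ |∏ i ∈ range (n + 1), ω ((k : ℤ) + i)| ^ (1 / (n : ℝ)))
    {j : ℕ} (hj : N ≤ j) (hj0 : j ≠ 0) {n : ℤ} (hn : 0 ≤ n + 1) :
    R ^ j ≤ |∏ i ∈ range (j + 1), ω (n + 1 + i)| := by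
  obtain ⟨k, hk⟩ : ∃ k : ℕ, (k : ℤ) = n + 1 := ⟨_, Int.toNat_of_nonneg hn⟩
  exact hk ▸ pow_le_abs_of_le_rpow_one_div hR hj0 (hR' j hj k)

lemma norm_iterate_succ_le_of_forall_pos_eq_zero (hS : ∀ x n, S x n = ω (n + 1) * x (n + 1))
    {r : ℝ} {N : ℕ}
    (hr : ∀ n ≥ N, ∀ k : ℕ, |∏ i ∈ range (n + 1), ω (-(k : ℤ) - i)| ^ (1 / (n : ℝ)) ≤ r)
    {x : lp (fun _ : ℤ => ℝ) p} (hx : ∀ n : ℤ, 0 < n → x n = 0) {j : ℕ} (hj : N ≤ j)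
    (hj0 : j ≠ 0) : ‖S^[j + 1] x‖ ≤ r ^ j * ‖x‖ := by
  have hr0 : 0 ≤ r := (Real.rpow_nonneg (abs_nonneg _) _).trans (hr j hj 0)
  refine lp.norm_le_mul_norm_of_le_comp (zero_lt_one.trans_le Fact.out).ne'
    (add_left_injective ((j + 1 : ℕ) : ℤ)) (pow_nonneg hr0 j) fun n => ?_
  rw [iterate_apply hS, Real.norm_eq_abs, Real.norm_eq_abs, abs_mul]
  by_cases hn : n + (j + 1 : ℕ) ≤ 0
  · gcongr
    exact abs_prod_weight_le hr hj hj0 hn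
  · rw [hx _ (by omega), abs_zero, mul_zero, mul_zero]

lemma norm_symm_iterate_succ_le_of_forall_nonpos_eq_zero
    (hS : ∀ x n, S x n = ω (n + 1) * x (n + 1)) {R : ℝ} (hR : 0 < R) {N : ℕ}
    (hR' : ∀ n ≥ N, ∀ k : ℕ, R ≤ |∏ i ∈ range (n + 1), ω ((k : ℤ) + i)| ^ (1 / (n : ℝ)))
    {x : lp (fun _ : ℤ => ℝ) p} (hx : ∀ n : ℤ, n ≤ 0 → x n = 0) {j : ℕ} (hj : N ≤ j)
    (hj0 : j ≠ 0) : ‖S.symm^[j + 1] x‖ ≤ R⁻¹ ^ j * ‖x‖ := by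
  refine lp.norm_le_mul_norm_of_le_comp (zero_lt_one.trans_le Fact.out).ne'
    (sub_left_injective (b := ((j + 1 : ℕ) : ℤ))) (by positivity) fun n => ?_
  obtain ⟨n, rfl⟩ : ∃ n', n = n' + ((j + 1 : ℕ) : ℤ) := ⟨_, (sub_add_cancel n _).symm⟩
  rw [add_sub_cancel_right, symm_iterate_apply_add hS, Real.norm_eq_abs, Real.norm_eq_abs,
    abs_div, div_eq_inv_mul, inv_pow]
  by_cases hn : 0 < n
  · gcongr
    exact pow_le_abs_prod_weight hR.le hR' hj hj0 (by omega)
  · simp [hx n (by omega)]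

end WeightedShift

theorem stmt_17_general
    (p : ℝ≥0∞) [Fact (1 ≤ p)]
    (ω : ℤ → ℝ)
    (Sw : lp (fun _ : ℤ => ℝ) p ≃L[ℝ] lp (fun _ : ℤ => ℝ) p)
    (hSw : ∀ (x : lp (fun _ : ℤ => ℝ) p) (n : ℤ), (Sw x : ℤ → ℝ) n = ω (n + 1) * x (n + 1))
    -- limsup_{n→∞} sup_k |ω_{-k}⋯ω_{-k-n}|^{1/n} < 1
    (hlimsup : ∃ r < (1 : ℝ), ∃ N : ℕ, ∀ n ≥ N, ∀ k : ℕ,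
      |∏ i ∈ Finset.range (n + 1), ω (-(k : ℤ) - (i : ℤ))| ^ (1 / (n : ℝ)) ≤ r)
    -- liminf_{n→∞} inf_k |ω_k⋯ω_{k+n}|^{1/n} > 1
    (hliminf : ∃ R > (1 : ℝ), ∃ N : ℕ, ∀ n ≥ N, ∀ k : ℕ,
      R ≤ |∏ i ∈ Finset.range (n + 1), ω ((k : ℤ) + (i : ℤ))| ^ (1 / (n : ℝ))) :
    -- E^s and E^u are closed
    (IsClosed {x : lp (fun _ : ℤ => ℝ) p | ∀ n : ℤ, 0 < n → x n = 0} ∧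
     IsClosed {x : lp (fun _ : ℤ => ℝ) p | ∀ n : ℤ, n ≤ 0 → x n = 0}) ∧
    -- X = E^s ⊕ E^u
    (∀ x : lp (fun _ : ℤ => ℝ) p, ∃! y : (lp (fun _ : ℤ => ℝ) p) × (lp (fun _ : ℤ => ℝ) p),
      (∀ n : ℤ, 0 < n → y.1 n = 0) ∧ (∀ n : ℤ, n ≤ 0 → y.2 n = 0) ∧ x = y.1 + y.2) ∧
    -- invariance: S_ω(E^s) ⊆ E^s and S_ω^{-1}(E^u) ⊆ E^u
    (∀ x : lp (fun _ : ℤ => ℝ) p, (∀ n : ℤ, 0 < n → x n = 0) →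
      ∀ n : ℤ, 0 < n → (Sw x) n = 0) ∧
    (∀ x : lp (fun _ : ℤ => ℝ) p, (∀ n : ℤ, n ≤ 0 → x n = 0) →
      ∀ n : ℤ, n ≤ 0 → (Sw.symm x) n = 0) ∧
    -- uniform exponential contraction on E^s and expansion on E^u
    (∃ D ≥ (1 : ℝ), ∃ lam > (0 : ℝ),
      (∀ x : lp (fun _ : ℤ => ℝ) p, (∀ n : ℤ, 0 < n → x n = 0) →
        ∀ m : ℕ, ‖(⇑Sw)^[m] x‖ ≤ D * Real.exp (-lam * m) * ‖x‖) ∧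
      (∀ x : lp (fun _ : ℤ => ℝ) p, (∀ n : ℤ, n ≤ 0 → x n = 0) →
        ∀ m : ℕ, ‖(⇑Sw.symm)^[m] x‖ ≤ D * Real.exp (-lam * m) * ‖x‖)) := by
  obtain ⟨r, hr1, N₁, hr⟩ := hlimsup
  obtain ⟨R, hR1, N₂, hR⟩ := hliminf
  obtain ⟨ρ, hrρ, hRρ, hρ0, hρ1⟩ : ∃ ρ, r ≤ ρ ∧ R⁻¹ ≤ ρ ∧ 0 < ρ ∧ ρ < 1 :=
    ⟨max r R⁻¹, le_max_left _ _, le_max_right _ _,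
      (inv_pos.2 (by linarith)).trans_le (le_max_right _ _),
      max_lt hr1 (inv_lt_one_of_one_lt₀ hR1)⟩
  obtain ⟨Ds, hDs⟩ := exists_norm_iterate_le_mul_pow Sw.lipschitz (map_zero Sw) hρ0 hρ1.le
    (s := {x | ∀ n : ℤ, 0 < n → x n = 0}) (N := max N₁ 1) fun x hx j hj =>
      norm_iterate_succ_le_of_forall_pos_eq_zero hSw (fun n hn k => (hr n hn k).trans hrρ) hx
        (le_of_max_le_left hj) (by omega)
  obtain ⟨Du, hDu⟩ := exists_norm_iterate_le_mul_pow Sw.symm.lipschitz (map_zero Sw.symm) hρ0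
    hρ1.le (s := {x | ∀ n : ℤ, n ≤ 0 → x n = 0}) (N := max N₂ 1) fun x hx j hj => by
      simpa using norm_symm_iterate_succ_le_of_forall_nonpos_eq_zero hSw (inv_pos.2 hρ0)
        (fun n hn k => (inv_le_of_inv_le₀ (by linarith) hRρ).trans (hR n hn k)) hx
        (le_of_max_le_left hj) (by omega)
  have hexp (m : ℕ) : Real.exp (-(-Real.log ρ) * m) = ρ ^ m := by
    rw [neg_neg, ← Real.rpow_def_of_pos hρ0, Real.rpow_natCast]
  have hD {D : ℝ} (hDle : D ≤ max (max Ds Du) 1) (x : lp (fun _ : ℤ => ℝ) p) (m : ℕ) :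
      D * ρ ^ m * ‖x‖ ≤ max (max Ds Du) 1 * Real.exp (-(-Real.log ρ) * m) * ‖x‖ := by
    rw [hexp]
    gcongr
  refine ⟨⟨lp.isClosed_setOf_forall_mem_eq_zero {n | 0 < n},
      lp.isClosed_setOf_forall_mem_eq_zero {n | n ≤ 0}⟩,
    fun x => by simpa [not_lt] using lp.existsUnique_add_of_forall_mem_eq_zero {n : ℤ | 0 < n} x,
    fun x hx n hn => apply_eq_zero_of_forall_pos_eq_zero hSw hx hn,
    fun x hx n hn => symm_apply_eq_zero_of_forall_nonpos_eq_zero hSw hx hn,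
    max (max Ds Du) 1, le_max_right _ _, -Real.log ρ, neg_pos.2 (Real.log_neg hρ0 hρ1),
    fun x hx m => (hDs x hx m).trans (hD (le_max_of_le_left (le_max_left _ _)) x m),
    fun x hx m => (hDu x hx m).trans (hD (le_max_of_le_left (le_max_right _ _)) x m)⟩

theorem stmt_17
    (p : ℝ≥0∞) [Fact (1 ≤ p)] (hp : p ≠ ⊤)
    (ω : ℤ → ℝ)
    (hωbd : ∃ W, ∀ n, |ω n| ≤ W)
    (hωinf : ∃ w > 0, ∀ n : ℤ, w ≤ |ω n|)
    (Sw : lp (fun _ : ℤ => ℝ) p ≃L[ℝ] lp (fun _ : ℤ => ℝ) p)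
    (hSw : ∀ (x : lp (fun _ : ℤ => ℝ) p) (n : ℤ), (Sw x : ℤ → ℝ) n = ω (n + 1) * x (n + 1))
    -- limsup_{n→∞} sup_k |ω_{-k}⋯ω_{-k-n}|^{1/n} < 1
    (hlimsup : ∃ r < (1 : ℝ), ∃ N : ℕ, ∀ n ≥ N, ∀ k : ℕ,
      |∏ i ∈ Finset.range (n + 1), ω (-(k : ℤ) - (i : ℤ))| ^ (1 / (n : ℝ)) ≤ r)
    -- liminf_{n→∞} inf_k |ω_k⋯ω_{k+n}|^{1/n} > 1
    (hliminf : ∃ R > (1 : ℝ), ∃ N : ℕ, ∀ n ≥ N, ∀ k : ℕ,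
      R ≤ |∏ i ∈ Finset.range (n + 1), ω ((k : ℤ) + (i : ℤ))| ^ (1 / (n : ℝ))) :
    -- E^s and E^u are closed
    (IsClosed {x : lp (fun _ : ℤ => ℝ) p | ∀ n : ℤ, 0 < n → x n = 0} ∧
     IsClosed {x : lp (fun _ : ℤ => ℝ) p | ∀ n : ℤ, n ≤ 0 → x n = 0}) ∧
    -- X = E^s ⊕ E^u
    (∀ x : lp (fun _ : ℤ => ℝ) p, ∃! y : (lp (fun _ : ℤ => ℝ) p) × (lp (fun _ : ℤ => ℝ) p),
      (∀ n : ℤ, 0 < n → y.1 n = 0) ∧ (∀ n : ℤ, n ≤ 0 → y.2 n = 0) ∧ x = y.1 + y.2) ∧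
    -- invariance: S_ω(E^s) ⊆ E^s and S_ω^{-1}(E^u) ⊆ E^u
    (∀ x : lp (fun _ : ℤ => ℝ) p, (∀ n : ℤ, 0 < n → x n = 0) →
      ∀ n : ℤ, 0 < n → (Sw x) n = 0) ∧
    (∀ x : lp (fun _ : ℤ => ℝ) p, (∀ n : ℤ, n ≤ 0 → x n = 0) →
      ∀ n : ℤ, n ≤ 0 → (Sw.symm x) n = 0) ∧
    -- uniform exponential contraction on E^s and expansion on E^u
    (∃ D ≥ (1 : ℝ), ∃ lam > (0 : ℝ),
      (∀ x : lp (fun _ : ℤ => ℝ) p, (∀ n : ℤ, 0 < n → x n = 0) →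
        ∀ m : ℕ, ‖(⇑Sw)^[m] x‖ ≤ D * Real.exp (-lam * m) * ‖x‖) ∧
      (∀ x : lp (fun _ : ℤ => ℝ) p, (∀ n : ℤ, n ≤ 0 → x n = 0) →
        ∀ m : ℕ, ‖(⇑Sw.symm)^[m] x‖ ≤ D * Real.exp (-lam * m) * ‖x‖)) :=
  stmt_17_general p ω Sw hSw hlimsup hliminf
end
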